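/- arXiv:2103.10598 — 7 statements merged into one kernel-verified Lean document; each statement's English description precedes it below -/
import Mathlib

section
/- For a prime p and positive integer k, the number of maximal cyclic subgroups of the group C_p × C_{p^k} equals kp − k + 2. -/
/-- A subgroup is maximal cyclic if it is cyclic and not properly contained
in any cyclic subgroup. -/
def IsMaximalCyclic {G : Type*} [Group G] (H : Subgroup G) : Prop :=
  IsCyclic H ∧ ∀ K : Subgroup G, IsCyclic K → H ≤ K → H = K

/-- `lambdaCover G` is the number of maximal cyclic subgroups of `G`. -/
noncomputable def lambdaCover (G : Type*) [Group G] : ℕ :=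
  Nat.card {H : Subgroup G // IsMaximalCyclic H}

open Subgroup Multiplicative

section helpers
variable {G : Type*} [Group G]

lemma isCyclic_zpowers' (g : G) : IsCyclic (zpowers g) := by
  refine ⟨⟨⟨g, mem_zpowers g⟩, fun x => ?_⟩⟩
  obtain ⟨z, hz⟩ := mem_zpowers_iff.mp x.2
  exact mem_zpowers_iff.mpr ⟨z, by ext; simpa⟩

lemma cyclic_eq_zpowers {K : Subgroup G} (hK : IsCyclic K) : ∃ g : G, K = zpowers g := by
  obtain ⟨⟨g, hgK⟩, hg⟩ := hK.exists_generator
  refine ⟨g, le_antisymm ?_ (zpowers_le.mpr hgK)⟩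
  intro x hx
  obtain ⟨z, hz⟩ := mem_zpowers_iff.mp (hg ⟨x, hx⟩)
  exact mem_zpowers_iff.mpr ⟨z, by simpa using congrArg Subtype.val hz⟩

lemma zpowers_zpow_eq {p N : ℕ} (hp : p.Prime) (g : G) (hord : orderOf g ∣ p ^ N)
    (z : ℤ) (hz : ¬ (p:ℤ) ∣ z) : zpowers (g ^ z) = zpowers g := by
  refine le_antisymm (zpowers_le.mpr (mem_zpowers_iff.mpr ⟨z, rfl⟩)) (zpowers_le.mpr ?_)
  have hpz : Prime (p:ℤ) := Nat.prime_iff_prime_int.mp hp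
  have hco : IsCoprime ((p:ℤ)^N) z := ((hpz.coprime_iff_not_dvd).mpr hz).pow_left
  obtain ⟨u, v, huv⟩ := hco
  have h1 : g ^ ((p:ℤ) ^ N) = 1 := by
    have : g ^ (p ^ N : ℕ) = 1 := orderOf_dvd_iff_pow_eq_one.mp hord
    rw [← zpow_natCast] at this; simpa using this
  have : g = (g ^ z) ^ v := by
    calc g = g ^ (u * (p:ℤ)^N + v * z) := by rw [huv, zpow_one]
    _ = (g ^ ((p:ℤ)^N)) ^ u * (g ^ z) ^ v := by
        rw [zpow_add, mul_comm u, mul_comm v, zpow_mul, zpow_mul]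
    _ = (g ^ z) ^ v := by rw [h1]; simp
  exact mem_zpowers_iff.mpr ⟨v, this.symm⟩

end helpers

section concrete
variable {p k : ℕ}

lemma zpow_ofAdd (x : ZMod p × ZMod (p^k)) (z : ℤ) :
    (ofAdd x) ^ z = ofAdd (((z : ZMod p) * x.1, (z : ZMod (p^k)) * x.2)) := by
  rw [← ofAdd_zsmul]
  congr 1
  ext <;> simp [zsmul_eq_mul]

lemma pow_ofAdd (x : ZMod p × ZMod (p^k)) (n : ℕ) :
    (ofAdd x) ^ n = ofAdd (((n : ZMod p) * x.1, (n : ZMod (p^k)) * x.2)) := by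
  rw [← ofAdd_nsmul]
  congr 1
  ext <;> simp [nsmul_eq_mul]

lemma ord_dvd (hp : p.Prime) (g : Multiplicative (ZMod p × ZMod (p^k))) :
    orderOf g ∣ p ^ (k+1) := by
  haveI : NeZero p := ⟨hp.ne_zero⟩
  haveI : NeZero (p^k) := ⟨pow_ne_zero k hp.ne_zero⟩
  have h := orderOf_dvd_natCard g
  have hc : Nat.card (Multiplicative (ZMod p × ZMod (p^k))) = p ^ (k+1) := by
    calc Nat.card (Multiplicative (ZMod p × ZMod (p^k)))
        = Nat.card (ZMod p × ZMod (p^k)) := Nat.card_congr Multiplicative.toAdd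
      _ = p ^ (k+1) := by simp [Nat.card_prod, pow_succ, mul_comm]
  rwa [hc] at h

/-- criterion for being a p-th power -/
lemma pth_power_iff (hp : p.Prime) (x : ZMod p × ZMod (p^k)) :
    (∃ y : Multiplicative (ZMod p × ZMod (p^k)), y ^ p = ofAdd x) ↔
      (x.1 = 0 ∧ ∃ d : ZMod (p^k), x.2 = p * d) := by
  constructor
  · rintro ⟨y, hy⟩
    obtain ⟨⟨c, d⟩, rfl⟩ := ofAdd.surjective y
    rw [pow_ofAdd] at hy
    have h2 := ofAdd.injective hy
    rw [Prod.ext_iff] at h2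
    obtain ⟨h2a, h2b⟩ := h2
    simp only [ZMod.natCast_self, zero_mul] at h2a
    exact ⟨h2a.symm, d, h2b.symm⟩
  · rintro ⟨h1, d, hd⟩
    refine ⟨ofAdd (0, d), ?_⟩
    rw [pow_ofAdd]
    congr 1
    ext
    · simp [h1]
    · simp [hd]

lemma not_pth_imp_max (hp : p.Prime) (x : Multiplicative (ZMod p × ZMod (p^k)))
    (hx : ¬ ∃ y, y ^ p = x) : IsMaximalCyclic (zpowers x) := by
  refine ⟨isCyclic_zpowers' x, fun K hK hle => ?_⟩
  obtain ⟨h, rfl⟩ := cyclic_eq_zpowers hK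
  obtain ⟨z, hz⟩ := mem_zpowers_iff.mp (hle (mem_zpowers x))
  by_cases hdvd : (p:ℤ) ∣ z
  · exfalso
    obtain ⟨w, rfl⟩ := hdvd
    refine hx ⟨h ^ w, ?_⟩
    rw [← hz, ← zpow_natCast, ← zpow_mul, mul_comm]
  · rw [← hz, zpowers_zpow_eq hp h (ord_dvd hp h) z hdvd]

lemma max_imp_not_pth (hp : p.Prime) (hk : 0 < k) (x : Multiplicative (ZMod p × ZMod (p^k)))
    (hH : IsMaximalCyclic (zpowers x)) : ¬ ∃ y, y ^ p = x := by
  haveI : Fact (1 < p) := ⟨hp.one_lt⟩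
  rintro ⟨y, hy⟩
  have hx1 : x ≠ 1 := by
    rintro rfl
    have h := hH.2 (zpowers (ofAdd ((1 : ZMod p), (0 : ZMod (p^k)))))
      (isCyclic_zpowers' _) (by simp [zpowers_le])
    have h1 : ofAdd ((1 : ZMod p), (0 : ZMod (p^k))) ∈ zpowers (1 : Multiplicative (ZMod p × ZMod (p^k))) := by
      rw [h]; exact mem_zpowers _
    obtain ⟨z, hz⟩ := mem_zpowers_iff.mp h1
    rw [one_zpow] at hz
    have := congrArg Prod.fst (ofAdd.injective hz)
    simp at this
  have hy1 : y ≠ 1 := by rintro rfl; rw [one_pow] at hy; exact hx1 hy.symm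
  have hle : zpowers x ≤ zpowers y := zpowers_le.mpr (by rw [← hy]; exact pow_mem (mem_zpowers y) p)
  have heq := hH.2 (zpowers y) (isCyclic_zpowers' y) hle
  have hymem : y ∈ zpowers x := heq ▸ mem_zpowers y
  obtain ⟨z, hz⟩ := mem_zpowers_iff.mp hymem
  have h2 : y ^ ((p:ℤ) * z - 1) = 1 := by
    rw [zpow_sub, zpow_one, zpow_mul, zpow_natCast, hy, hz, mul_inv_cancel]
  have hord : ((orderOf y : ℤ)) ∣ (p:ℤ) * z - 1 := orderOf_dvd_iff_zpow_eq_one.mpr h2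
  have hordy : orderOf y ≠ 1 := fun h => hy1 (orderOf_eq_one_iff.mp h)
  have hpdvd : p ∣ orderOf y := by
    obtain ⟨t, ht, hteq⟩ := (Nat.dvd_prime_pow hp).mp (ord_dvd hp y)
    rcases Nat.eq_zero_or_pos t with rfl | htpos
    · simp at hteq; exact absurd hteq hy1
    · rw [hteq]; exact dvd_pow_self p htpos.ne'
  have h3 : (p:ℤ) ∣ (p:ℤ) * z - 1 := dvd_trans (Int.natCast_dvd_natCast.mpr hpdvd) hord
  have h4 : (p:ℤ) ∣ 1 := (dvd_sub_right ⟨z, rfl⟩).mp h3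
  have h5 := Int.le_of_dvd one_pos h4
  have := hp.two_le
  omega

end concrete

def Idx (p k : ℕ) : Type := Unit ⊕ (Fin (k-1) × Fin (p-1)) ⊕ Fin p

def fIdx (p k : ℕ) : Idx p k → ℕ
  | .inl _ => 1
  | .inr (.inl ja) => ja.2.val + 1
  | .inr (.inr a) => a.val

def eIdx (p k : ℕ) : Idx p k → ℕ
  | .inl _ => k
  | .inr (.inl ja) => ja.1.val + 1
  | .inr (.inr _) => 0

def gen (p k : ℕ) (i : Idx p k) : Multiplicative (ZMod p × ZMod (p^k)) :=
  ofAdd (((fIdx p k i : ℕ) : ZMod p), ((p ^ (eIdx p k i) : ℕ) : ZMod (p^k)))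

section main
variable {p k : ℕ}

lemma eIdx_le (i : Idx p k) : eIdx p k i ≤ k := by
  rcases i with u | ⟨⟨j,a⟩ | a⟩ <;> simp [eIdx] <;> have := j.isLt <;> omega

lemma addOrder_snd' (hp : p.Prime) (e : ℕ) (he : e ≤ k) :
    addOrderOf (((p^e : ℕ) : ZMod (p^k))) = p^(k-e) := by
  rw [ZMod.addOrderOf_coe _ (pow_ne_zero k hp.ne_zero),
    Nat.gcd_eq_right (pow_dvd_pow p he), Nat.pow_div he hp.pos]

lemma smul_addOrder_dvd' (c : ZMod (p^k)) (z : ℤ) :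
    addOrderOf ((z : ZMod (p^k)) * c) ∣ addOrderOf c := by
  have h0 : (addOrderOf c : ZMod (p^k)) * c = 0 := by
    rw [← nsmul_eq_mul]; exact addOrderOf_nsmul_eq_zero c
  apply addOrderOf_dvd_iff_nsmul_eq_zero.mpr
  rw [nsmul_eq_mul, mul_left_comm, h0, mul_zero]

lemma n_one (hp : p.Prime) {e : ℕ} (he1 : e + 1 ≤ k) {n : ℤ}
    (h : (n : ZMod (p^k)) * ((p^e :ℕ) : ZMod (p^k)) = ((p^e:ℕ) : ZMod (p^k))) :
    ((n : ℤ) : ZMod p) = 1 := by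
  push_cast at h
  have hz : (((n - 1) * (p:ℤ)^e : ℤ) : ZMod (p^k)) = 0 := by
    push_cast
    rw [sub_mul, one_mul, h, sub_self]
  have hdvd : ((p:ℤ)^k) ∣ (n-1) * (p:ℤ)^e := by
    have := (ZMod.intCast_zmod_eq_zero_iff_dvd _ _).mp hz
    exact_mod_cast this
  have hsplit : (p:ℤ)^e * (p:ℤ)^(k-e) = (p:ℤ)^k := by
    rw [← pow_add]; congr 1; omega
  have hd2 : (p:ℤ)^(k-e) ∣ (n-1) := by
    rw [← hsplit, mul_comm (n-1)] at hdvd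
    exact (mul_dvd_mul_iff_left (pow_ne_zero e (by exact_mod_cast hp.ne_zero : (p:ℤ) ≠ 0))).mp hdvd
  have hd3 : (p:ℤ) ∣ n - 1 := dvd_trans (dvd_pow_self (p:ℤ) (by omega : k - e ≠ 0)) hd2
  have h4 : ((n - 1 : ℤ) : ZMod p) = 0 := (ZMod.intCast_zmod_eq_zero_iff_dvd _ _).mpr hd3
  push_cast at h4
  rwa [sub_eq_zero] at h4

lemma gen_inj (hp : p.Prime) (hk : 0 < k) (i i' : Idx p k)
    (h : zpowers (gen p k i) = zpowers (gen p k i')) : i = i' := by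
  haveI : Fact (1 < p) := ⟨hp.one_lt⟩
  have h1 : gen p k i' ∈ zpowers (gen p k i) := h ▸ mem_zpowers _
  have h2 : gen p k i ∈ zpowers (gen p k i') := h.symm ▸ mem_zpowers _
  obtain ⟨n, hn⟩ := mem_zpowers_iff.mp h1
  obtain ⟨n', hn'⟩ := mem_zpowers_iff.mp h2
  rw [gen, gen, zpow_ofAdd] at hn hn'
  have hn1 := congrArg Prod.fst (ofAdd.injective hn)
  have hn2 := congrArg Prod.snd (ofAdd.injective hn)
  have hn2' := congrArg Prod.snd (ofAdd.injective hn')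
  simp only at hn1 hn2 hn2'
  have hord : addOrderOf (((p ^ eIdx p k i : ℕ) : ZMod (p^k)))
      = addOrderOf (((p ^ eIdx p k i' : ℕ) : ZMod (p^k))) :=
    Nat.dvd_antisymm (hn2' ▸ smul_addOrder_dvd' _ n') (hn2 ▸ smul_addOrder_dvd' _ n)
  rw [addOrder_snd' hp _ (eIdx_le i), addOrder_snd' hp _ (eIdx_le i')] at hord
  have he : eIdx p k i = eIdx p k i' := by
    have h5 := Nat.pow_right_injective hp.two_le hord
    have := eIdx_le i; have := eIdx_le i'
    omega
  rcases i with u | ⟨⟨j,a⟩ | a⟩ <;> rcases i' with u' | ⟨⟨j',a'⟩ | a'⟩ <;>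
    simp only [eIdx] at he
  · rfl
  · exfalso; have := j'.isLt; omega
  · exfalso; omega
  · exfalso; have := j.isLt; omega
  · -- mid/mid
    have hj : j = j' := Fin.ext (by omega)
    subst hj
    simp only [eIdx] at hn2
    have he1 : j.val + 1 + 1 ≤ k := by have := j.isLt; omega
    have hone : ((n:ℤ) : ZMod p) = 1 := n_one hp he1 hn2
    rw [hone, one_mul] at hn1
    simp only [fIdx] at hn1
    have hval := congrArg ZMod.val hn1
    rw [ZMod.val_cast_of_lt (by have := a.isLt; omega),
      ZMod.val_cast_of_lt (by have := a'.isLt; omega)] at hval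
    have : a = a' := Fin.ext (by omega)
    rw [this]
  · exfalso; omega
  · exfalso; omega
  · exfalso; have := j'.isLt; omega
  · -- top/top
    simp only [eIdx] at hn2
    have he1 : 0 + 1 ≤ k := by omega
    have hone : ((n:ℤ) : ZMod p) = 1 := n_one hp he1 hn2
    rw [hone, one_mul] at hn1
    simp only [fIdx] at hn1
    have hval := congrArg ZMod.val hn1
    rw [ZMod.val_cast_of_lt a.isLt, ZMod.val_cast_of_lt a'.isLt] at hval
    have : a = a' := Fin.ext hval
    rw [this]

lemma gen_max (hp : p.Prime) (hk : 0 < k) (i : Idx p k) :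
    IsMaximalCyclic (zpowers (gen p k i)) := by
  haveI : Fact (1 < p) := ⟨hp.one_lt⟩
  haveI : NeZero (p^k) := ⟨pow_ne_zero k hp.ne_zero⟩
  apply not_pth_imp_max hp
  rw [gen, pth_power_iff hp]
  rintro ⟨h1, d, hd⟩
  replace h1 : ((fIdx p k i : ℕ) : ZMod p) = 0 := h1
  replace hd : ((p ^ eIdx p k i : ℕ) : ZMod (p^k)) = p * d := hd
  have h2 := hp.two_le
  rcases i with u | ⟨⟨j,a⟩ | a⟩
  · simp only [fIdx] at h1
    rw [ZMod.natCast_eq_zero_iff] at h1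
    have := Nat.le_of_dvd one_pos h1
    omega
  · simp only [fIdx] at h1
    rw [ZMod.natCast_eq_zero_iff] at h1
    have := Nat.le_of_dvd (by omega) h1
    have := a.isLt
    omega
  · simp only [eIdx, pow_zero, Nat.cast_one] at hd
    have hu : IsUnit ((p:ℕ) : ZMod (p^k)) := IsUnit.of_mul_eq_one d hd.symm
    rw [ZMod.isUnit_iff_coprime] at hu
    have := hu.eq_one_of_dvd (dvd_pow_self p hk.ne')
    omega

lemma gen_surj (hp : p.Prime) (hk : 0 < k) (H : Subgroup (Multiplicative (ZMod p × ZMod (p^k))))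
    (hH : IsMaximalCyclic H) : ∃ i, zpowers (gen p k i) = H := by
  haveI : Fact p.Prime := ⟨hp⟩
  haveI : Fact (1 < p) := ⟨hp.one_lt⟩
  haveI : NeZero (p^k) := ⟨pow_ne_zero k hp.ne_zero⟩
  obtain ⟨g, rfl⟩ := cyclic_eq_zpowers hH.1
  obtain ⟨⟨a, b⟩, rfl⟩ := ofAdd.surjective g
  have hnp := max_imp_not_pth hp hk _ hH
  rw [pth_power_iff hp] at hnp
  push_neg at hnp
  replace hnp : a = 0 → ∀ d : ZMod (p^k), b ≠ p * d := hnp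
  by_cases hb : b = 0
  · subst hb
    have ha : a ≠ 0 := by
      intro h0; exact hnp h0 0 (by simp)
    have hav : a.val ≠ 0 := fun h => ha ((ZMod.val_eq_zero _).mp h)
    have hnd : ¬ (p:ℤ) ∣ (a.val : ℤ) := by
      intro hdvd
      have := Int.natCast_dvd_natCast.mp hdvd
      have := Nat.le_of_dvd (Nat.pos_of_ne_zero hav) this
      have := ZMod.val_lt a
      omega
    refine ⟨.inl (), ?_⟩
    have hkey : gen p k (Sum.inl ()) ^ ((a.val : ℤ)) = ofAdd (a, 0) := by
      unfold gen; rw [zpow_ofAdd]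
      congr 1
      simp only [fIdx, eIdx]
      ext
      · simp [ZMod.natCast_val, ZMod.cast_id]
      · simp [ZMod.natCast_self]
    have h1 := zpowers_zpow_eq hp (gen p k (Sum.inl ())) (ord_dvd hp (gen p k (Sum.inl ())))
      (a.val : ℤ) hnd
    exact h1.symm.trans (congrArg Subgroup.zpowers hkey)
  · have hbv : b.val ≠ 0 := fun h => hb ((ZMod.val_eq_zero _).mp h)
    obtain ⟨s, m, hm, hsm⟩ := Nat.exists_eq_pow_mul_and_not_dvd hbv p hp.ne_one
    have hmpos : 0 < m := Nat.pos_of_ne_zero (fun h => hm (h ▸ dvd_zero p))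
    have hps : p ^ s ≤ b.val := by
      rw [hsm]; exact Nat.le_mul_of_pos_right _ hmpos
    have hsk : s < k := by
      have h1 : b.val < p^k := ZMod.val_lt b
      have h2 : p ^ s < p ^ k := lt_of_le_of_lt hps h1
      exact (Nat.pow_lt_pow_iff_right hp.one_lt).mp h2
    have hmz : ((m:ℕ) : ZMod p) ≠ 0 := fun h => hm ((ZMod.natCast_eq_zero_iff _ _).mp h)
    have hnd : ¬ (p:ℤ) ∣ (m : ℤ) := by
      intro hdvd; exact hm (Int.natCast_dvd_natCast.mp hdvd)
    set a' : ZMod p := ((m : ZMod p))⁻¹ * a with ha'def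
    have hma' : ((m:ℕ) : ZMod p) * a' = a := by
      rw [ha'def, ← mul_assoc, mul_inv_cancel₀ hmz, one_mul]
    have hsnd : ((m:ℕ) : ZMod (p^k)) * ((p^s :ℕ) : ZMod (p^k)) = b := by
      rw [← Nat.cast_mul, mul_comm, ← hsm]
      simp [ZMod.natCast_val, ZMod.cast_id]
    by_cases hs : s = 0
    · subst hs
      set i0 : Idx p k := Sum.inr (Sum.inr ⟨a'.val, ZMod.val_lt a'⟩) with hi0
      refine ⟨i0, ?_⟩
      have hkey : gen p k i0 ^ ((m : ℕ) : ℤ) = ofAdd (a, b) := by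
        rw [gen, zpow_ofAdd]
        congr 1
        simp only [fIdx, eIdx, hi0]
        ext
        · push_cast [ZMod.natCast_val, ZMod.cast_id]
          exact hma'
        · push_cast [ZMod.natCast_val, ZMod.cast_id]
          exact_mod_cast hsnd
      have h1 := zpowers_zpow_eq hp (gen p k i0) (ord_dvd hp (gen p k i0))
        ((m : ℕ) : ℤ) (by exact_mod_cast hnd)
      exact h1.symm.trans (congrArg Subgroup.zpowers hkey)
    · have ha : a ≠ 0 := by
        intro h0
        apply hnp h0 ((p^(s-1) * m : ℕ) : ZMod (p^k))
        have hps' : p * (p^(s-1) * m) = b.val := by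
          rw [hsm, ← mul_assoc]
          congr 1
          rw [← pow_succ']
          congr 1
          omega
        calc b = ((b.val : ℕ) : ZMod (p^k)) := by simp [ZMod.natCast_val, ZMod.cast_id]
          _ = ((p * (p^(s-1) * m) : ℕ) : ZMod (p^k)) := by rw [hps']
          _ = p * ((p^(s-1) * m : ℕ) : ZMod (p^k)) := by push_cast; ring
      have ha'ne : a' ≠ 0 := fun h => ha (by rw [← hma', h, mul_zero])
      have hv1 : 1 ≤ a'.val := Nat.pos_of_ne_zero (fun h => ha'ne ((ZMod.val_eq_zero _).mp h))
      have hvlt := ZMod.val_lt a'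
      set i0 : Idx p k := Sum.inr (Sum.inl (⟨s-1, by omega⟩, ⟨a'.val - 1, by omega⟩)) with hi0
      refine ⟨i0, ?_⟩
      have hkey : gen p k i0 ^ ((m : ℕ) : ℤ) = ofAdd (a, b) := by
        rw [gen, zpow_ofAdd]
        congr 1
        simp only [fIdx, eIdx, hi0]
        ext
        · have : a'.val - 1 + 1 = a'.val := by omega
          rw [this]
          push_cast [ZMod.natCast_val, ZMod.cast_id]
          exact hma'
        · have : s - 1 + 1 = s := by omega
          rw [this]
          push_cast [ZMod.natCast_val, ZMod.cast_id]
          exact_mod_cast hsnd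
      have h1 := zpowers_zpow_eq hp (gen p k i0) (ord_dvd hp (gen p k i0))
        ((m : ℕ) : ℤ) (by exact_mod_cast hnd)
      exact h1.symm.trans (congrArg Subgroup.zpowers hkey)

end main

theorem lambda_Cp_times_Cpk (p k : ℕ) (hp : p.Prime) (hk : 0 < k) :
    lambdaCover (Multiplicative (ZMod p × ZMod (p ^ k))) = k * p - k + 2 := by
  haveI : Fact (1 < p) := ⟨hp.one_lt⟩
  haveI : NeZero (p^k) := ⟨pow_ne_zero k hp.ne_zero⟩
  have hF : Function.Bijective (fun i : Idx p k =>
      (⟨zpowers (gen p k i), gen_max hp hk i⟩ :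
        {H : Subgroup (Multiplicative (ZMod p × ZMod (p^k))) // IsMaximalCyclic H})) := by
    constructor
    · intro i i' hii
      exact gen_inj hp hk i i' (congrArg Subtype.val hii)
    · rintro ⟨H, hH⟩
      obtain ⟨i, hi⟩ := gen_surj hp hk H hH
      exact ⟨i, Subtype.ext hi⟩
  have hcard : lambdaCover (Multiplicative (ZMod p × ZMod (p ^ k))) = Nat.card (Idx p k) :=
    (Nat.card_eq_of_bijective _ hF).symm
  have hidx : Nat.card (Idx p k) = 1 + ((k-1) * (p-1) + p) := by
    simp [Idx, Nat.card_sum, Nat.card_prod]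
  rw [hcard, hidx]
  obtain ⟨k', rfl⟩ : ∃ k', k = k' + 1 := ⟨k - 1, by omega⟩
  obtain ⟨p', rfl⟩ : ∃ p', p = p' + 2 := ⟨p - 2, by have := hp.two_le; omega⟩
  have h1 : (k' + 1) * (p' + 2) = (k' + 1) * (p' + 1) + (k' + 1) := by ring
  have h2 : k' + 1 - 1 = k' := by omega
  have h3 : p' + 2 - 1 = p' + 1 := by omega
  rw [h2, h3, h1, Nat.add_sub_cancel]
  ring
end

section
/- For n ≥ 3, the number of maximal cyclic subgroups of the generalized quaternion group of order 2^n equals 2^{n−2} + 1. -/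
namespace QGAux

open QuaternionGroup Subgroup

variable {m : ℕ}

lemma two_m_zero : ((m : ZMod (2 * m)) + (m : ZMod (2 * m))) = 0 := by
  have h : ((2 * m : ℕ) : ZMod (2 * m)) = 0 := ZMod.natCast_self _
  push_cast at h
  linear_combination h

lemma isCyclic_zpowers {G : Type*} [Group G] (g : G) : IsCyclic (zpowers g) := by
  refine ⟨⟨⟨g, mem_zpowers g⟩, ?_⟩⟩
  rintro ⟨x, hx⟩
  obtain ⟨t, rfl⟩ := mem_zpowers_iff.mp hx
  refine ⟨t, Subtype.ext ?_⟩
  push_cast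
  simp

lemma xa_pow_three (i : ZMod (2 * m)) :
    (xa i : QuaternionGroup m) ^ 3 = xa (i + (m : ZMod (2 * m))) := by
  have h3 : (3 : ℕ) = 2 + 1 := rfl
  rw [h3, pow_succ, xa_sq, a_mul_xa]
  congr 1
  have := two_m_zero (m := m)
  linear_combination -this

lemma xa_zpow_two (i : ZMod (2 * m)) :
    (xa i : QuaternionGroup m) ^ (2 : ℤ) = a (m : ZMod (2 * m)) := by
  rw [show (2 : ℤ) = ((2 : ℕ) : ℤ) from rfl, zpow_natCast, xa_sq]

lemma xa_zpow_three (i : ZMod (2 * m)) :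
    (xa i : QuaternionGroup m) ^ (3 : ℤ) = xa (i + (m : ZMod (2 * m))) := by
  rw [show (3 : ℤ) = ((3 : ℕ) : ℤ) from rfl, zpow_natCast, xa_pow_three]

lemma a_one_zpow (t : ℤ) :
    (a 1 : QuaternionGroup m) ^ t = a ((t : ZMod (2 * m))) := by
  induction t using Int.induction_on with
  | zero => rw [zpow_zero]; norm_num
  | succ k ih => rw [zpow_add, ih, zpow_one, a_mul_a]; push_cast; ring_nf
  | pred k ih =>
      have hinv : (a 1 : QuaternionGroup m)⁻¹ = a (-1) := by
        rw [inv_eq_iff_mul_eq_one, a_mul_a]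
        norm_num
      rw [sub_eq_add_neg, zpow_add, ih, zpow_neg, zpow_one, hinv, a_mul_a]
      push_cast; ring_nf

lemma mem_zpowers_a_one (hm : 0 < m) (j : ZMod (2 * m)) :
    (a j : QuaternionGroup m) ∈ zpowers (a 1 : QuaternionGroup m) := by
  haveI : NeZero (2 * m) := ⟨by omega⟩
  rw [mem_zpowers_iff]
  refine ⟨(j.val : ℤ), ?_⟩
  rw [a_one_zpow]
  push_cast
  rw [ZMod.natCast_val, ZMod.cast_id]

lemma mem_zpowers_a_one_iff (hm : 0 < m) (g : QuaternionGroup m) :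
    g ∈ zpowers (a 1 : QuaternionGroup m) ↔ ∃ j, g = a j := by
  haveI : NeZero (2 * m) := ⟨by omega⟩
  rw [mem_zpowers_iff]
  constructor
  · rintro ⟨t, rfl⟩
    exact ⟨_, (a_one_zpow t)⟩
  · rintro ⟨j, rfl⟩
    exact ⟨(j.val : ℤ), by rw [a_one_zpow]; push_cast; rw [ZMod.natCast_val, ZMod.cast_id]⟩

lemma mem_zpowers_xa_iff (hm : 0 < m) (i : ZMod (2 * m)) (g : QuaternionGroup m) :
    g ∈ zpowers (xa i : QuaternionGroup m) ↔
      g = 1 ∨ g = xa i ∨ g = a (m : ZMod (2 * m)) ∨ g = xa (i + (m : ZMod (2 * m))) := by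
  haveI : NeZero m := ⟨by omega⟩
  rw [mem_zpowers_iff]
  constructor
  · rintro ⟨t, rfl⟩
    rw [← zpow_mod_orderOf, orderOf_xa]
    have h4 : (0 : ℤ) ≤ t % 4 := Int.emod_nonneg t (by norm_num)
    have h4' : t % 4 < 4 := Int.emod_lt_of_pos t (by norm_num)
    push_cast
    interval_cases h : (t % 4)
    · left; simp
    · right; left; simp
    · right; right; left; exact xa_zpow_two i
    · right; right; right; exact xa_zpow_three i
  · rintro (rfl | rfl | rfl | rfl)
    · exact ⟨0, by simp⟩
    · exact ⟨1, by simp⟩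
    · exact ⟨(2 : ℤ), xa_zpow_two i⟩
    · exact ⟨(3 : ℤ), xa_zpow_three i⟩

lemma zpowers_xa_add_m (hm : 0 < m) (i : ZMod (2 * m)) :
    zpowers (xa (i + (m : ZMod (2 * m))) : QuaternionGroup m)
      = zpowers (xa i : QuaternionGroup m) := by
  apply le_antisymm
  · rw [zpowers_le, mem_zpowers_xa_iff hm]
    tauto
  · rw [zpowers_le, mem_zpowers_xa_iff hm (i + (m : ZMod (2 * m)))]
    right; right; right
    have h : i + (m : ZMod (2 * m)) + (m : ZMod (2 * m)) = i := by
      have := two_m_zero (m := m)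
      linear_combination this
    rw [h]

lemma isCyclic_exists_zpowers {G : Type*} [Group G] {H : Subgroup G}
    (h : IsCyclic H) : ∃ g : G, H = zpowers g := by
  obtain ⟨⟨g, hgH⟩, hg⟩ := h.exists_generator
  refine ⟨g, le_antisymm ?_ ((zpowers_le).mpr hgH)⟩
  intro x hx
  obtain ⟨t, ht⟩ := hg ⟨x, hx⟩
  exact ⟨t, congrArg Subtype.val ht⟩

lemma a_one_not_mem_zpowers_xa (hm : 2 ≤ m) (i : ZMod (2 * m)) :
    (a 1 : QuaternionGroup m) ∉ zpowers (xa i : QuaternionGroup m) := by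
  rw [mem_zpowers_xa_iff (by omega) i, one_def]
  rintro (h | h | h | h)
  · have h1 : ((1 : ℕ) : ZMod (2 * m)) = ((0 : ℕ) : ZMod (2 * m)) := by
      push_cast; injection h
    rw [ZMod.natCast_eq_natCast_iff'] at h1
    rw [Nat.mod_eq_of_lt (by omega), Nat.mod_eq_of_lt (by omega)] at h1
    omega
  · exact (by cases h)
  · have h1 : ((1 : ℕ) : ZMod (2 * m)) = ((m : ℕ) : ZMod (2 * m)) := by
      push_cast; injection h
    rw [ZMod.natCast_eq_natCast_iff'] at h1
    rw [Nat.mod_eq_of_lt (by omega), Nat.mod_eq_of_lt (by omega)] at h1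
    omega
  · exact (by cases h)

lemma maximal_zpowers_a_one (hm : 2 ≤ m) :
    IsMaximalCyclic (zpowers (a 1 : QuaternionGroup m)) := by
  refine ⟨isCyclic_zpowers _, fun K hK hle => ?_⟩
  obtain ⟨g, rfl⟩ := isCyclic_exists_zpowers hK
  cases g with
  | a j =>
      refine le_antisymm hle ?_
      rw [zpowers_le]
      exact mem_zpowers_a_one (by omega) j
  | xa j =>
      exact absurd (hle (mem_zpowers _)) (a_one_not_mem_zpowers_xa hm j)

lemma maximal_zpowers_xa (hm : 2 ≤ m) (i : ZMod (2 * m)) :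
    IsMaximalCyclic (zpowers (xa i : QuaternionGroup m)) := by
  refine ⟨isCyclic_zpowers _, fun K hK hle => ?_⟩
  obtain ⟨g, rfl⟩ := isCyclic_exists_zpowers hK
  cases g with
  | a j =>
      obtain ⟨u, hu⟩ := (mem_zpowers_a_one_iff (by omega : 0 < m) (xa i)).mp
        ((zpowers_le.mpr (mem_zpowers_a_one (by omega) j)) (hle (mem_zpowers _)))
      exact absurd hu (fun hh => by cases hh)
  | xa j =>
      refine le_antisymm hle ?_
      rw [zpowers_le]
      have hj := hle (mem_zpowers (xa i))
      rw [mem_zpowers_xa_iff (by omega : 0 < m) j] at hj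
      rcases hj with h | h | h | h
      · rw [one_def] at h; exact absurd h (fun hh => by cases hh)
      · have hij : i = j := by injection h
        subst hij; exact mem_zpowers _
      · exact absurd h (fun hh => by cases hh)
      · have hij : i = j + (m : ZMod (2 * m)) := by injection h
        subst hij
        rw [mem_zpowers_xa_iff (by omega : 0 < m)]
        right; right; right
        congr 1
        have := two_m_zero (m := m)
        linear_combination -this

lemma classification (hm : 2 ≤ m) (H : Subgroup (QuaternionGroup m))
    (hH : IsMaximalCyclic H) :
    H = zpowers (a 1 : QuaternionGroup m) ∨
      ∃ i, H = zpowers (xa i : QuaternionGroup m) := by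
  obtain ⟨g, rfl⟩ := isCyclic_exists_zpowers hH.1
  cases g with
  | a j =>
      left
      exact hH.2 _ (isCyclic_zpowers _) (zpowers_le.mpr (mem_zpowers_a_one (by omega) j))
  | xa j => exact Or.inr ⟨j, rfl⟩

lemma lambda_quaternion (hm : 2 ≤ m) :
    lambdaCover (QuaternionGroup m) = m + 1 := by
  haveI : NeZero m := ⟨by omega⟩
  have hm0 : 0 < m := by omega
  let f : Option (ZMod m) → {H : Subgroup (QuaternionGroup m) // IsMaximalCyclic H} :=
    fun o => match o with
      | none => ⟨zpowers (a 1 : QuaternionGroup m), maximal_zpowers_a_one hm⟩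
      | some j => ⟨zpowers (xa ((j.val : ZMod (2 * m))) : QuaternionGroup m),
          maximal_zpowers_xa hm _⟩
  have hmlt : ∀ j : ZMod m, j.val < m := fun j => ZMod.val_lt j
  have hfinj : Function.Injective f := by
    rintro (_ | j) (_ | j') h
    · rfl
    · exfalso
      have h' : zpowers (a 1 : QuaternionGroup m)
          = zpowers (xa ((j'.val : ZMod (2 * m))) : QuaternionGroup m) :=
        congrArg Subtype.val h
      exact a_one_not_mem_zpowers_xa hm _ (h' ▸ mem_zpowers _)
    · exfalso
      have h' : zpowers (a 1 : QuaternionGroup m)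
          = zpowers (xa ((j.val : ZMod (2 * m))) : QuaternionGroup m) :=
        (congrArg Subtype.val h).symm
      exact a_one_not_mem_zpowers_xa hm _ (h' ▸ mem_zpowers _)
    · have h' : zpowers (xa ((j.val : ZMod (2 * m))) : QuaternionGroup m)
          = zpowers (xa ((j'.val : ZMod (2 * m))) : QuaternionGroup m) :=
        congrArg Subtype.val h
      have hmem : (xa ((j.val : ZMod (2 * m))) : QuaternionGroup m)
          ∈ zpowers (xa ((j'.val : ZMod (2 * m))) : QuaternionGroup m) :=
        h' ▸ mem_zpowers _
      rw [mem_zpowers_xa_iff hm0] at hmem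
      rcases hmem with hc | hc | hc | hc
      · rw [one_def] at hc; exact absurd hc (fun hh => by cases hh)
      · have hvv : ((j.val : ℕ) : ZMod (2*m)) = ((j'.val : ℕ) : ZMod (2*m)) := by injection hc
        rw [ZMod.natCast_eq_natCast_iff'] at hvv
        rw [Nat.mod_eq_of_lt (by have := hmlt j; omega),
          Nat.mod_eq_of_lt (by have := hmlt j'; omega)] at hvv
        congr 1
        exact ZMod.val_injective _ hvv
      · exact absurd hc (fun hh => by cases hh)
      · exfalso
        have hvv : ((j.val : ℕ) : ZMod (2*m))
            = ((j'.val : ℕ) : ZMod (2*m)) + ((m : ℕ) : ZMod (2*m)) := by injection hc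
        have hvv' : ((j.val : ℕ) : ZMod (2*m)) = (((j'.val + m : ℕ)) : ZMod (2*m)) := by
          push_cast
          exact hvv
        rw [ZMod.natCast_eq_natCast_iff'] at hvv'
        rw [Nat.mod_eq_of_lt (by have := hmlt j; omega),
          Nat.mod_eq_of_lt (by have := hmlt j'; omega)] at hvv'
        have := hmlt j
        omega
  have hfsurj : Function.Surjective f := by
    rintro ⟨H, hH⟩
    rcases classification hm H hH with h | ⟨i, h⟩
    · exact ⟨none, Subtype.ext h.symm⟩
    · haveI : NeZero (2 * m) := ⟨by omega⟩
      have hival := ZMod.val_lt i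
      by_cases hlt : i.val < m
      · refine ⟨some ((i.val : ZMod m)), ?_⟩
        apply Subtype.ext
        show zpowers (xa (((((i.val : ZMod m)).val : ℕ) : ZMod (2 * m))) : QuaternionGroup m) = H
        rw [h]
        congr 2
        rw [ZMod.val_natCast_of_lt hlt, ZMod.natCast_val, ZMod.cast_id]
      · refine ⟨some (((i.val - m : ℕ) : ZMod m)), ?_⟩
        apply Subtype.ext
        show zpowers
            (xa ((((((i.val - m : ℕ) : ZMod m)).val : ℕ) : ZMod (2 * m))) : QuaternionGroup m) = H
        rw [h]
        have hsub : i.val - m < m := by omega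
        rw [ZMod.val_natCast_of_lt hsub]
        have hcast : ((i.val - m : ℕ) : ZMod (2 * m)) + ((m : ℕ) : ZMod (2 * m)) = i := by
          have h1 : ((i.val - m : ℕ) : ZMod (2*m)) + ((m : ℕ) : ZMod (2*m))
              = (((i.val - m) + m : ℕ) : ZMod (2*m)) := by push_cast; ring
          rw [h1, Nat.sub_add_cancel (by omega), ZMod.natCast_val, ZMod.cast_id]
        calc zpowers (xa (((i.val - m : ℕ) : ZMod (2 * m))) : QuaternionGroup m)
            = zpowers (xa ((((i.val - m : ℕ) : ZMod (2 * m)) + ((m:ℕ) : ZMod (2*m))))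
                : QuaternionGroup m) := (zpowers_xa_add_m hm0 _).symm
          _ = zpowers (xa i : QuaternionGroup m) := by rw [hcast]
  have hcard : Nat.card {H : Subgroup (QuaternionGroup m) // IsMaximalCyclic H}
      = Nat.card (Option (ZMod m)) :=
    (Nat.card_congr (Equiv.ofBijective f ⟨hfinj, hfsurj⟩)).symm
  rw [lambdaCover, hcard, Finite.card_option, Nat.card_zmod]

end QGAux

theorem lambda_generalized_quaternion (n : ℕ) (hn : 3 ≤ n) :
    lambdaCover (QuaternionGroup (2 ^ (n - 2))) = 2 ^ (n - 2) + 1 := by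
  apply QGAux.lambda_quaternion
  have h1 : 1 ≤ n - 2 := by omega
  calc 2 = 2 ^ 1 := (pow_one 2).symm
    _ ≤ 2 ^ (n - 2) := Nat.pow_le_pow_right (by norm_num) h1
end

section
/- Let G be a finite group and H a subgroup of G. Then λ(H) ≤ λ(G), where λ denotes the number of maximal cyclic subgroups. -/
theorem lambda_subgroup_le {G : Type*} [Group G] [Finite G] (H : Subgroup G) :
    lambdaCover H ≤ lambdaCover G := by
  classical
  -- every cyclic subgroup of G is contained in a maximal cyclic subgroup
  have exmax : ∀ C : Subgroup G, IsCyclic C → ∃ M, IsMaximalCyclic M ∧ C ≤ M := by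
    intro C hC
    obtain ⟨M, hM, hmax⟩ := Set.Finite.exists_maximalFor id
      {M : Subgroup G | IsCyclic M ∧ C ≤ M} (Set.toFinite _) ⟨C, hC, le_refl C⟩
    exact ⟨M, ⟨hM.1, fun K hK hMK => le_antisymm hMK (hmax ⟨hK, hM.2.trans hMK⟩ hMK)⟩, hM.2⟩
  choose f hf hle using exmax
  -- the recovery map: for M maximal cyclic in G, (M ⊓ H).subgroupOf H is cyclic
  have hrec : ∀ M : Subgroup G, IsCyclic M → IsCyclic ((M ⊓ H).subgroupOf H) := by
    intro M hM
    haveI : IsCyclic M := hM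
    haveI : IsCyclic ((M ⊓ H).subgroupOf M) := Subgroup.isCyclic _
    haveI : IsCyclic (M ⊓ H : Subgroup G) :=
      isCyclic_of_surjective (Subgroup.subgroupOfEquivOfLe (inf_le_left : M ⊓ H ≤ M))
        (MulEquiv.surjective _)
    exact isCyclic_of_surjective
      (Subgroup.subgroupOfEquivOfLe (inf_le_right : M ⊓ H ≤ H)).symm
      (MulEquiv.surjective _)
  -- key: a maximal cyclic K of H with map H.subtype K ≤ M satisfies K = (M ⊓ H).subgroupOf H
  have key : ∀ (K : Subgroup H), IsMaximalCyclic K → ∀ M : Subgroup G, IsCyclic M →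
      K.map H.subtype ≤ M → K = (M ⊓ H).subgroupOf H := by
    intro K hK M hM hKM
    refine hK.2 _ (hrec M hM) ?_
    rw [Subgroup.subgroupOf, Subgroup.comap_inf]
    refine le_inf (Subgroup.map_le_iff_le_comap.mp hKM) ?_
    intro x _
    simp
  -- the injection
  have cyc : ∀ K : Subgroup H, IsMaximalCyclic K → IsCyclic (K.map H.subtype) := by
    intro K hK
    haveI : IsCyclic K := hK.1
    exact isCyclic_of_surjective (K.equivMapOfInjective H.subtype H.subtype_injective)
      (MulEquiv.surjective _)
  let F : {K : Subgroup H // IsMaximalCyclic K} → {M : Subgroup G // IsMaximalCyclic M} :=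
    fun K => ⟨f (K.1.map H.subtype) (cyc K.1 K.2), hf _ _⟩
  have hFinj : Function.Injective F := by
    intro K1 K2 hEq
    have h1 : K1.1 = ((f (K1.1.map H.subtype) (cyc K1.1 K1.2)) ⊓ H).subgroupOf H :=
      key K1.1 K1.2 _ ((hf _ _).1) (hle _ _)
    have h2 : K2.1 = ((f (K2.1.map H.subtype) (cyc K2.1 K2.2)) ⊓ H).subgroupOf H :=
      key K2.1 K2.2 _ ((hf _ _).1) (hle _ _)
    have : (F K1).1 = (F K2).1 := congrArg Subtype.val hEq
    apply Subtype.ext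
    rw [h1, h2]
    simp only [F] at this
    rw [this]
  exact Nat.card_le_card_of_injective F hFinj
end

section
/- Let G be a finite group and N a normal subgroup. Then λ(G/N) ≤ λ(G). Moreover, if N is the intersection of all maximal cyclic subgroups of G, then λ(G/N) = λ(G). -/
private lemma cyclic_eq_zpowers_s6 {G : Type*} [Group G] {H : Subgroup G} (h : IsCyclic H) :
    ∃ g : G, H = Subgroup.zpowers g := by
  obtain ⟨⟨g, hg⟩, hgen⟩ := h.exists_generator
  refine ⟨g, le_antisymm ?_ (Subgroup.zpowers_le.mpr hg)⟩
  intro x hx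
  obtain ⟨k, hk⟩ := hgen ⟨x, hx⟩
  refine Subgroup.mem_zpowers_iff.mpr ⟨k, ?_⟩
  have := congrArg Subtype.val hk
  simpa using this

private lemma zpowers_isCyclic {G : Type*} [Group G] (g : G) :
    IsCyclic (Subgroup.zpowers g) := by
  refine ⟨⟨⟨g, Subgroup.mem_zpowers g⟩, ?_⟩⟩
  rintro ⟨x, k, rfl⟩
  exact ⟨k, Subtype.ext (by simp)⟩

private lemma exists_maxcyc {G : Type*} [Group G] [Finite G] (H : Subgroup G)
    (hH : IsCyclic H) : ∃ M : Subgroup G, IsMaximalCyclic M ∧ H ≤ M := by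
  have hfin : ({K : Subgroup G | IsCyclic K ∧ H ≤ K}).Finite := Set.toFinite _
  obtain ⟨M, hM, hmax'⟩ := Set.Finite.exists_maximal hfin ⟨H, hH, le_rfl⟩
  have hmax : ∀ K ∈ {K : Subgroup G | IsCyclic K ∧ H ≤ K}, M ≤ K → M = K :=
    fun K hK hle => le_antisymm hle (hmax' hK hle)
  exact ⟨M, ⟨hM.1, fun K hK hle => hmax K ⟨hK, hM.2.trans hle⟩ hle⟩, hM.2⟩

private lemma lift_maxcyc {G : Type*} [Group G] [Finite G] (N : Subgroup G) [N.Normal]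
    (H : Subgroup (G ⧸ N)) (hH : IsMaximalCyclic H) :
    ∃ M : Subgroup G, IsMaximalCyclic M ∧ M.map (QuotientGroup.mk' N) = H := by
  obtain ⟨gb, hzp⟩ := cyclic_eq_zpowers_s6 hH.1
  obtain ⟨g, rfl⟩ := QuotientGroup.mk'_surjective N gb
  obtain ⟨M, hM, hle⟩ := exists_maxcyc (Subgroup.zpowers g) (zpowers_isCyclic g)
  have hcyc : IsCyclic (M.map (QuotientGroup.mk' N)) :=
    have : IsCyclic M := hM.1
    isCyclic_of_surjective _ ((QuotientGroup.mk' N).subgroupMap_surjective M)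
  have hsub : H ≤ M.map (QuotientGroup.mk' N) := by
    rw [hzp, ← MonoidHom.map_zpowers]
    exact Subgroup.map_mono hle
  exact ⟨M, hM, (hH.2 _ hcyc hsub).symm⟩

theorem lambda_quotient {G : Type*} [Group G] [Finite G] (N : Subgroup G) [N.Normal] :
    lambdaCover (G ⧸ N) ≤ lambdaCover G ∧
    (N = ⨅ H ∈ {H : Subgroup G | IsMaximalCyclic H}, H →
      lambdaCover (G ⧸ N) = lambdaCover G) := by
  set π := QuotientGroup.mk' N with hπ
  have key : ∀ x : {H : Subgroup (G ⧸ N) // IsMaximalCyclic H},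
      ∃ M : Subgroup G, IsMaximalCyclic M ∧ M.map π = x.1 :=
    fun x => lift_maxcyc N x.1 x.2
  choose f hf1 hf2 using key
  have h1 : lambdaCover (G ⧸ N) ≤ lambdaCover G := by
    refine Nat.card_le_card_of_injective (fun x => ⟨f x, hf1 x⟩) ?_
    intro x y hxy
    have : f x = f y := congrArg Subtype.val hxy
    exact Subtype.ext (by rw [← hf2 x, ← hf2 y, this])
  refine ⟨h1, fun hN => ?_⟩
  have hNle : ∀ M : Subgroup G, IsMaximalCyclic M → N ≤ M := by
    intro M hM
    rw [hN]
    exact iInf₂_le M hM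
  have hcomap : ∀ M : Subgroup G, IsMaximalCyclic M → (M.map π).comap π = M := by
    intro M hM
    rw [Subgroup.comap_map_eq, hπ, QuotientGroup.ker_mk', sup_eq_left.mpr (hNle M hM)]
  have hmapmax : ∀ M : Subgroup G, IsMaximalCyclic M → IsMaximalCyclic (M.map π) := by
    intro M hM
    constructor
    · have : IsCyclic M := hM.1
      exact isCyclic_of_surjective _ (π.subgroupMap_surjective M)
    · intro K hK hle
      obtain ⟨gb, hzp⟩ := cyclic_eq_zpowers_s6 hK
      obtain ⟨g, rfl⟩ := QuotientGroup.mk'_surjective N gb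
      obtain ⟨L, hL, hgle⟩ := exists_maxcyc (Subgroup.zpowers g) (zpowers_isCyclic g)
      have hKL : K ≤ L.map π := by
        rw [hzp, hπ, ← MonoidHom.map_zpowers]
        exact Subgroup.map_mono hgle
      have hML : M ≤ L := by
        have := Subgroup.comap_mono (f := π) (hle.trans hKL)
        rwa [hcomap M hM, hcomap L hL] at this
      have hMLeq : M = L := hM.2 L hL.1 hML
      exact le_antisymm hle (hKL.trans (by rw [hMLeq]))
  have h2 : lambdaCover G ≤ lambdaCover (G ⧸ N) := by
    refine Nat.card_le_card_of_injective
      (fun M : {M : Subgroup G // IsMaximalCyclic M} => ⟨M.1.map π, hmapmax M.1 M.2⟩) ?_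
    intro x y hxy
    have : x.1.map π = y.1.map π := congrArg Subtype.val hxy
    refine Subtype.ext ?_
    rw [← hcomap x.1 x.2, ← hcomap y.1 y.2, this]
  exact le_antisymm h1 h2
end

section
/- Let G be a finite group and p a prime. If G has at least one maximal cyclic subgroup of order p and k is the number of maximal cyclic subgroups of order p, then λ(G) ≤ |G| − k(p − 2) − 1. -/
lemma exists_zpowers_eq {G : Type*} [Group G] {H : Subgroup G} (h : IsCyclic H) :
    ∃ g : G, Subgroup.zpowers g = H := by
  obtain ⟨⟨g, hg⟩, hgen⟩ := h.exists_generator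
  refine ⟨g, le_antisymm (Subgroup.zpowers_le.mpr hg) ?_⟩
  intro y hy
  obtain ⟨n, hn⟩ := hgen ⟨y, hy⟩
  exact ⟨n, by simpa [Subtype.ext_iff] using hn⟩

theorem lambda_le_of_maximal_cyclic_order_p {G : Type*} [Group G] [Finite G]
    (p : ℕ) (hp : p.Prime) (k : ℕ)
    (hk : k = Nat.card {H : Subgroup G // IsMaximalCyclic H ∧ Nat.card H = p})
    (hpos : 0 < k) :
    lambdaCover G + k * (p - 2) + 1 ≤ Nat.card G := by
  classical
  have _i1 := Fintype.ofFinite G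
  have _i2 := Fintype.ofFinite (Subgroup G)
  set Gen : Subgroup G → Finset G :=
    fun H => Finset.univ.filter (fun g => Subgroup.zpowers g = H) with hGenDef
  set MC : Finset (Subgroup G) := Finset.univ.filter IsMaximalCyclic with hMCDef
  set MCp : Finset (Subgroup G) :=
    Finset.univ.filter (fun H => IsMaximalCyclic H ∧ Nat.card H = p) with hMCpDef
  have hMCpsub : MCp ⊆ MC := by
    intro H hH
    simp only [hMCpDef, hMCDef, Finset.mem_filter] at hH ⊢
    exact ⟨hH.1, hH.2.1⟩
  have hkcard : k = MCp.card := by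
    rw [hk, Nat.card_eq_fintype_card, Fintype.card_subtype]
  have hlcard : lambdaCover G = MC.card := by
    rw [lambdaCover, Nat.card_eq_fintype_card, Fintype.card_subtype]
  -- an order-p maximal cyclic subgroup exists
  obtain ⟨H0, hH0⟩ : ∃ H0, H0 ∈ MCp := by
    rw [hkcard] at hpos; exact Finset.card_pos.mp hpos
  obtain ⟨hH0mc, hH0p⟩ : IsMaximalCyclic H0 ∧ Nat.card H0 = p :=
    (Finset.mem_filter.mp hH0).2
  -- the identity is not a generator of any maximal cyclic subgroup
  have hone : ∀ H ∈ MC, (1 : G) ∉ Gen H := by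
    intro H hH h1
    have hz : Subgroup.zpowers (1 : G) = H := (Finset.mem_filter.mp h1).2
    have hbot : H = ⊥ := by rw [← hz, Subgroup.zpowers_one_eq_bot]
    have hmc : IsMaximalCyclic H := (Finset.mem_filter.mp hH).2
    have hHH0 : H = H0 := hmc.2 H0 hH0mc.1 (hbot ▸ bot_le)
    have : Nat.card H = p := hHH0 ▸ hH0p
    rw [hbot] at this
    simp [Subgroup.card_bot] at this
    exact hp.one_lt.ne this
  -- generators of an order-p maximal cyclic subgroup: exactly the p-1 nontrivial elements
  have hGenp : ∀ H ∈ MCp, (Gen H).card = p - 1 := by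
    intro H hH
    obtain ⟨hmc, hcardp⟩ : IsMaximalCyclic H ∧ Nat.card H = p :=
      (Finset.mem_filter.mp hH).2
    have hGenEq : Gen H = (Finset.univ.filter (fun g => g ∈ H)).erase 1 := by
      ext g
      simp only [hGenDef, Finset.mem_filter, Finset.mem_erase, Finset.mem_univ, true_and]
      constructor
      · rintro rfl
        refine ⟨?_, Subgroup.mem_zpowers g⟩
        rintro rfl
        rw [Subgroup.zpowers_one_eq_bot] at hcardp
        simp [Subgroup.card_bot] at hcardp
        exact hp.one_lt.ne hcardp
      · rintro ⟨hg1, hgH⟩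
        have hdvd : orderOf g ∣ p := hcardp ▸ Subgroup.orderOf_dvd_natCard H hgH
        have hord : orderOf g = p := by
          rcases (Nat.Prime.eq_one_or_self_of_dvd hp _ hdvd) with h | h
          · exact absurd (orderOf_eq_one_iff.mp h) hg1
          · exact h
        refine Subgroup.eq_of_le_of_card_ge (Subgroup.zpowers_le.mpr hgH) ?_
        rw [Nat.card_zpowers, hord, hcardp]
    rw [hGenEq, Finset.card_erase_of_mem (by simp [Subgroup.one_mem])]
    congr 1
    rw [← hcardp, Nat.card_eq_fintype_card, Fintype.card_subtype]
  -- every maximal cyclic subgroup has at least one generator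
  have hGen1 : ∀ H ∈ MC, 1 ≤ (Gen H).card := by
    intro H hH
    obtain ⟨g, hg⟩ := exists_zpowers_eq ((Finset.mem_filter.mp hH).2).1
    exact Finset.card_pos.mpr ⟨g, by simp [hGenDef, hg]⟩
  -- generator sets are pairwise disjoint
  have hdisj : ∀ H ∈ MC, ∀ K ∈ MC, H ≠ K → Disjoint (Gen H) (Gen K) := by
    intro H _ K _ hne
    rw [Finset.disjoint_left]
    intro g hgH hgK
    exact hne (((Finset.mem_filter.mp hgH).2).symm.trans (Finset.mem_filter.mp hgK).2)
  -- main counting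
  have hbiU : (MC.biUnion Gen).card = ∑ H ∈ MC, (Gen H).card :=
    Finset.card_biUnion hdisj
  have honeBi : (1 : G) ∉ MC.biUnion Gen := by
    intro h
    obtain ⟨H, hH, hg⟩ := Finset.mem_biUnion.mp h
    exact hone H hH hg
  have hcardG : (MC.biUnion Gen).card + 1 ≤ Nat.card G := by
    have : (insert (1 : G) (MC.biUnion Gen)).card ≤ Finset.univ.card :=
      Finset.card_le_card (Finset.subset_univ _)
    rw [Finset.card_insert_of_notMem honeBi] at this
    rwa [Nat.card_eq_fintype_card, Fintype.card, ← Nat.add_comm 1, Nat.add_comm]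
  -- split the sum
  have hsplit : ∑ H ∈ MC, (Gen H).card
      = ∑ H ∈ MCp, (Gen H).card + ∑ H ∈ MC \ MCp, (Gen H).card := by
    rw [← Finset.sum_sdiff hMCpsub, Nat.add_comm]
  have hsum1 : ∑ H ∈ MCp, (Gen H).card = k * (p - 1) := by
    rw [Finset.sum_congr rfl hGenp, Finset.sum_const, hkcard, smul_eq_mul]
  have hsum2 : MC.card - MCp.card ≤ ∑ H ∈ MC \ MCp, (Gen H).card := by
    calc MC.card - MCp.card = (MC \ MCp).card := (Finset.card_sdiff_of_subset hMCpsub).symm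
      _ = ∑ _H ∈ MC \ MCp, 1 := by simp
      _ ≤ ∑ H ∈ MC \ MCp, (Gen H).card :=
          Finset.sum_le_sum (fun H hH => hGen1 H (Finset.mem_sdiff.mp hH).1)
  have hkle : k ≤ lambdaCover G := by
    rw [hkcard, hlcard]; exact Finset.card_le_card hMCpsub
  have h2 := hp.two_le
  have key : lambdaCover G + k * (p - 2) ≤ (MC.biUnion Gen).card := by
    rw [hbiU, hsplit, hsum1]
    have hmul : k * (p - 1) = k * (p - 2) + k := by
      rw [show p - 1 = (p - 2) + 1 by omega, Nat.mul_add, Nat.mul_one]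
    omega
  omega
end

section
/- Let G be a finite group with λ(G) = |G| − t for some t ≤ 5, where λ(G) is the number of maximal cyclic subgroups of G. Then G is solvable. -/
open Subgroup

section Count
variable {G : Type*} [Group G]

lemma zpowers_isCyclic' (x : G) : IsCyclic (zpowers x) := by
  refine ⟨⟨⟨x, mem_zpowers x⟩, ?_⟩⟩
  rintro ⟨y, hy⟩
  obtain ⟨k, hk⟩ := hy
  exact ⟨k, by ext; simp [← hk]⟩

lemma cyclic_gen {H : Subgroup G} (h : IsCyclic H) : ∃ x : G, zpowers x = H := by
  obtain ⟨g, hg⟩ := h.exists_generator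
  refine ⟨(g : G), le_antisymm (zpowers_le.mpr g.2) ?_⟩
  intro y hy
  obtain ⟨k, hk⟩ := hg ⟨y, hy⟩
  exact ⟨k, by simpa using congrArg Subtype.val hk⟩

lemma count_lemma [Finite G] (hnt : Nontrivial G)
    (t : ℕ) (h : lambdaCover G + t = Nat.card G) :
    Nat.card {x : G // x ^ 2 ≠ 1} + 2 ≤ 2 * t := by
  classical
  have hfin := Fintype.ofFinite G
  set f : G → Subgroup G := fun x => Subgroup.zpowers x with hf
  set MCg : Finset G := Finset.univ.filter (fun x => IsMaximalCyclic (f x)) with hMCg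
  set D : Finset G := Finset.univ.filter (fun x => ¬ IsMaximalCyclic (f x)) with hD
  set A : Finset G := MCg.filter (fun x => ¬ x ^ 2 = 1) with hA
  set B : Finset G := MCg.filter (fun x => x ^ 2 = 1) with hB
  set D3 : Finset G := D.filter (fun x => ¬ x ^ 2 = 1) with hD3
  -- (a) lambdaCover = card of image
  have ha : lambdaCover G = (MCg.image f).card := by
    have h1 : lambdaCover G = Set.ncard {H : Subgroup G | IsMaximalCyclic H} := by
      rw [lambdaCover, ← Nat.card_coe_set_eq]
      rfl
    have h2 : {H : Subgroup G | IsMaximalCyclic H} = ↑(MCg.image f) := by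
      ext H
      constructor
      · intro hH
        obtain ⟨x, hx⟩ := cyclic_gen hH.1
        have hfx : f x = H := hx
        have hxMC : x ∈ MCg := by
          rw [hMCg, Finset.mem_filter]
          exact ⟨Finset.mem_univ _, by rw [hfx]; exact hH⟩
        exact Finset.mem_coe.mpr (Finset.mem_image.mpr ⟨x, hxMC, hfx⟩)
      · intro hH
        obtain ⟨x, hx, hfx⟩ := Finset.mem_image.mp (Finset.mem_coe.mp hH)
        rw [hMCg, Finset.mem_filter] at hx
        rw [← hfx]
        exact hx.2
    rw [h1, h2, Set.ncard_coe_finset]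
  -- (b)
  have hMCgsplit : B ∪ A = MCg := Finset.filter_union_filter_not_eq _ MCg
  have hb : (MCg.image f).card ≤ (A.image f).card + B.card := by
    calc (MCg.image f).card = ((B ∪ A).image f).card := by rw [hMCgsplit]
    _ = (B.image f ∪ A.image f).card := by rw [Finset.image_union]
    _ ≤ (B.image f).card + (A.image f).card := Finset.card_union_le _ _
    _ ≤ B.card + (A.image f).card := by
        have := Finset.card_image_le (s := B) (f := f); omega
    _ = (A.image f).card + B.card := by omega
  -- (c) fibers of A have size ≥ 2
  have hc : 2 * (A.image f).card ≤ A.card := by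
    have hmaps : ∀ x ∈ A, f x ∈ A.image f := fun x hx => Finset.mem_image_of_mem f hx
    rw [Finset.card_eq_sum_card_fiberwise hmaps]
    have hbound : ∀ H ∈ A.image f, 2 ≤ (A.filter (fun a => f a = H)).card := by
      intro H hH
      obtain ⟨x, hxA, hxH⟩ := Finset.mem_image.mp hH
      have hx2 : ¬ x ^ 2 = 1 := (Finset.mem_filter.mp hxA).2
      have hxinv : x⁻¹ ∈ A := by
        rw [hA, Finset.mem_filter] at hxA ⊢
        refine ⟨?_, ?_⟩
        · rw [hMCg, Finset.mem_filter] at hxA ⊢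
          refine ⟨Finset.mem_univ _, ?_⟩
          have : f x⁻¹ = f x := by rw [hf]; simp only []; exact Subgroup.zpowers_inv
          rw [this]; exact hxA.1.2
        · intro hc'
          apply hx2
          have := congrArg (fun y => y⁻¹) hc'
          simpa using this
      have hne : x ≠ x⁻¹ := by
        intro hc'
        apply hx2
        rw [pow_two]; nth_rewrite 2 [hc']; exact mul_inv_cancel x
      have hpair : ({x, x⁻¹} : Finset G) ⊆ A.filter (fun a => f a = H) := by
        intro y hy
        rcases Finset.mem_insert.mp hy with rfl | hy
        · exact Finset.mem_filter.mpr ⟨hxA, hxH⟩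
        · rw [Finset.mem_singleton] at hy
          subst hy
          refine Finset.mem_filter.mpr ⟨hxinv, ?_⟩
          rw [hf]
          simpa [Subgroup.zpowers_inv] using hxH
      calc 2 = ({x, x⁻¹} : Finset G).card := (Finset.card_pair hne).symm
      _ ≤ _ := Finset.card_le_card hpair
    calc 2 * (A.image f).card = ∑ _H ∈ A.image f, 2 := by
          rw [Finset.sum_const, smul_eq_mul]; omega
    _ ≤ ∑ H ∈ A.image f, (A.filter (fun a => f a = H)).card := Finset.sum_le_sum hbound
  -- (d) partition of G
  have hd : MCg.card + D.card = Nat.card G := by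
    rw [Nat.card_eq_fintype_card, ← Finset.card_univ]
    exact Finset.card_filter_add_card_filter_not _
  have hd2 : B.card + A.card = MCg.card := Finset.card_filter_add_card_filter_not _
  -- (e) 1 ∈ D
  have he : 1 ∈ D := by
    rw [hD, Finset.mem_filter]
    refine ⟨Finset.mem_univ _, ?_⟩
    intro hMC
    obtain ⟨x0, hx0⟩ := exists_ne (1 : G)
    have hbot : f 1 = ⊥ := by rw [hf]; simpa using Subgroup.zpowers_one_eq_bot
    have := hMC.2 (zpowers x0) (zpowers_isCyclic' x0) (by rw [hbot]; exact bot_le)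
    rw [hbot] at this
    exact hx0 (by
      have : x0 ∈ (⊥ : Subgroup G) := this ▸ mem_zpowers x0
      simpa using this)
  have he2 : D3.card + 1 ≤ D.card := by
    have hsub : D3 ⊆ D.erase 1 := by
      intro x hx
      rw [hD3, Finset.mem_filter] at hx
      refine Finset.mem_erase.mpr ⟨?_, hx.1⟩
      intro hc'
      exact hx.2 (by rw [hc']; simp)
    have := Finset.card_le_card hsub
    rw [Finset.card_erase_of_mem he] at this
    have hpos : 0 < D.card := Finset.card_pos.mpr ⟨1, he⟩
    omega
  -- (f)
  have hfcard : Nat.card {x : G // x ^ 2 ≠ 1} = A.card + D3.card := by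
    rw [Nat.card_eq_fintype_card, Fintype.card_subtype]
    have hsplit : Finset.univ.filter (fun x : G => x ^ 2 ≠ 1) = A ∪ D3 := by
      ext x
      simp only [Finset.mem_filter, Finset.mem_univ, true_and, Finset.mem_union, hA, hD3, hMCg,
        hD, ne_eq]
      by_cases hmc : IsMaximalCyclic (f x) <;> simp [hmc]
    rw [hsplit, Finset.card_union_of_disjoint]
    rw [Finset.disjoint_left]
    intro x hxA hxD
    rw [hA, hMCg, Finset.mem_filter, Finset.mem_filter] at hxA
    rw [hD3, hD, Finset.mem_filter, Finset.mem_filter] at hxD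
    exact hxD.1.2 hxA.1.2
  rw [ha] at h
  omega

end Count


open Subgroup

section Ladder
universe u
variable {G : Type u} [Group G]

lemma fact_eq' {n p k : ℕ} (hp : p.Prime) (hn : n ≠ 0) (h1 : p ^ k ∣ n) (h2 : ¬ p ^ (k+1) ∣ n) :
    n.factorization p = k := by
  have hle : k ≤ n.factorization p := (Nat.Prime.pow_dvd_iff_le_factorization hp hn).mp h1
  have hlt : ¬ (k + 1 ≤ n.factorization p) := fun hc =>
    h2 ((Nat.Prime.pow_dvd_iff_le_factorization hp hn).mpr hc)
  omega

lemma ext_solvable (N : Subgroup G) [N.Normal] (h1 : IsSolvable N) (h2 : IsSolvable (G ⧸ N)) :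
    IsSolvable G := by
  haveI : Group.IsSolvable N := h1; haveI : Group.IsSolvable (G ⧸ N) := h2
  exact solvable_of_ker_le_range N.subtype (QuotientGroup.mk' N)
    (by rw [QuotientGroup.ker_mk', Subgroup.range_subtype])

lemma sol_pp [Finite G] (p k : ℕ) (hp : p.Prime) (h : Nat.card G = p ^ k) : IsSolvable G := by
  have : Fact p.Prime := ⟨hp⟩
  have := (IsPGroup.of_card h).isNilpotent
  exact (inferInstance : Group.IsSolvable G)

lemma sol_one [Finite G] (h : Nat.card G = 1) : IsSolvable G := by
  have : Subsingleton G := (Nat.card_eq_one_iff_unique.mp h).1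
  exact isSolvable_of_comm fun a b => Subsingleton.elim _ _

lemma sylow_normal_of_unique [Finite G] {p : ℕ} [Fact p.Prime] (P : Sylow p G)
    (h : Nat.card (Sylow p G) = 1) : (P : Subgroup G).Normal := by
  have hs : Subsingleton (Sylow p G) := (Nat.card_eq_one_iff_unique.mp h).1
  rw [← normalizer_eq_top_iff, eq_top_iff']
  intro g
  exact Sylow.smul_eq_iff_mem_normalizer.mp (Subsingleton.elim _ _)

lemma exists_normal_sylow [Finite G] (p m k : ℕ) [hp : Fact p.Prime]
    (hcard : Nat.card G = p ^ k * m)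
    (hk : (Nat.card G).factorization p = k)
    (hd : ∀ d, d ∣ m → d % p = 1 % p → d = 1) :
    ∃ P : Sylow p G, (P : Subgroup G).Normal ∧ Nat.card (P : Subgroup G) = p ^ k ∧
      (P : Subgroup G).index = m := by
  obtain ⟨P⟩ : Nonempty (Sylow p G) := inferInstance
  have hP : Nat.card (P : Subgroup G) = p ^ k := by
    rw [Sylow.card_eq_multiplicity, hk]
  have hidx : (P : Subgroup G).index = m := by
    have h1 : Nat.card (P : Subgroup G) * (P : Subgroup G).index = Nat.card G :=
      Subgroup.card_mul_index _
    rw [hP, hcard] at h1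
    exact Nat.eq_of_mul_eq_mul_left (pow_pos hp.out.pos k) h1
  have hnum : Nat.card (Sylow p G) = 1 := by
    have h2 : Nat.card (Sylow p G) ∣ (P : Subgroup G).index := Sylow.card_dvd_index P
    rw [hidx] at h2
    exact hd _ h2 (card_sylow_modEq_one p G)
  exact ⟨P, sylow_normal_of_unique P hnum, hP, hidx⟩

lemma sol_step [Finite G] (p m k : ℕ) (hp : p.Prime)
    (hcard : Nat.card G = p ^ k * m)
    (hk : (Nat.card G).factorization p = k)
    (hd : ∀ d, d ∣ m → d % p = 1 % p → d = 1)
    (hq : ∀ (H : Type u) [Group H] [Finite H], Nat.card H = m → IsSolvable H) :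
    IsSolvable G := by
  have : Fact p.Prime := ⟨hp⟩
  obtain ⟨P, hnorm, hcardP, hidx⟩ := exists_normal_sylow p m k hcard hk hd
  exact ext_solvable P (sol_pp p k hp hcardP)
    (hq _ (by rw [← Subgroup.index_eq_card, hidx]))

lemma sol_six [Finite G] (h : Nat.card G = 6) : IsSolvable G := by
  refine sol_step 3 2 1 (by norm_num) (by omega) ?_ ?_ ?_
  · rw [h]; exact fact_eq' (by norm_num) (by norm_num) (by norm_num) (by norm_num)
  · intro d hd hm
    have h1 := Nat.le_of_dvd (by norm_num) hd
    interval_cases d <;> revert hd hm <;> decide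
  · exact fun H _ _ hH => sol_pp 2 1 (by norm_num) hH

lemma sol_dvd_six {H : Type*} [Group H] [Finite H] (h : Nat.card H ∣ 6) : IsSolvable H := by
  have hpos : 0 < Nat.card H := Nat.card_pos
  have hle : Nat.card H ≤ 6 := Nat.le_of_dvd (by norm_num) h
  interval_cases hc : (Nat.card H)
  · exact sol_one hc
  · exact sol_pp 2 1 (by norm_num) hc
  · exact sol_pp 3 1 (by norm_num) hc
  · exact absurd h (by decide)
  · exact sol_pp 5 1 (by norm_num) hc
  · exact sol_six hc

lemma sol_coset_trick [Finite G] (P : Subgroup G) (a : ℕ)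
    (hPcard : Nat.card P = 2 ^ a) (hidx : P.index = 3) : IsSolvable G := by
  classical
  set φ := MulAction.toPermHom G (G ⧸ P) with hφ
  set K := φ.ker with hK
  have hKle : K ≤ P := by
    rw [hK, hφ, ← Subgroup.normalCore_eq_ker]
    exact Subgroup.normalCore_le P
  have hKcard : Nat.card K ∣ 2 ^ a := by
    rw [← hPcard]; exact Subgroup.card_dvd_of_le hKle
  obtain ⟨b, hb, hKc⟩ := (Nat.dvd_prime_pow Nat.prime_two).mp hKcard
  have hsolK : IsSolvable K := sol_pp 2 b (by norm_num) hKc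
  have hcardQP : Nat.card (G ⧸ P) = 3 := by rw [← Subgroup.index_eq_card, hidx]
  have hsolrange : IsSolvable φ.range := by
    apply sol_dvd_six
    have h1 : Nat.card φ.range ∣ Nat.card (Equiv.Perm (G ⧸ P)) :=
      Subgroup.card_subgroup_dvd_card _
    have hFT : Fintype (G ⧸ P) := Fintype.ofFinite _
    have h2 : Nat.card (Equiv.Perm (G ⧸ P)) = 6 := by
      rw [Nat.card_eq_fintype_card, Fintype.card_perm, ← Nat.card_eq_fintype_card, hcardQP]
      norm_num [Nat.factorial]
    rwa [h2] at h1
  haveI : Group.IsSolvable φ.range := hsolrange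
  have hsolQ : IsSolvable (G ⧸ K) :=
    solvable_of_solvable_injective (QuotientGroup.quotientKerEquivRange φ).injective
  exact ext_solvable K hsolK hsolQ

end Ladder

open Subgroup

section S30
variable {G : Type*} [Group G]

lemma card_filter_mem [Fintype G] (H : Subgroup G) [DecidablePred (· ∈ H)] :
    (Finset.univ.filter (fun x : G => x ∈ H)).card = Nat.card H := by
  rw [Nat.card_eq_fintype_card]
  exact (Fintype.card_subtype _).symm

lemma order_five {P : Subgroup G} [Finite G] (hP : Nat.card P = 5) {x : G}
    (hx : x ∈ P) (hx1 : x ≠ 1) : zpowers x = P ∧ orderOf x = 5 := by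
  have hle : zpowers x ≤ P := zpowers_le.mpr hx
  have hdvd : Nat.card (zpowers x) ∣ 5 := hP ▸ Subgroup.card_dvd_of_le hle
  rw [Nat.card_zpowers] at hdvd
  have h5 : orderOf x = 5 := by
    rcases (Nat.dvd_prime (by norm_num)).mp hdvd with h | h
    · exact absurd (orderOf_eq_one_iff.mp h) hx1
    · exact h
  have : zpowers x = P := by
    apply Subgroup.eq_of_le_of_card_ge hle
    rw [hP, Nat.card_zpowers, h5]
  exact ⟨this, h5⟩

lemma sol_thirty [Finite G] (h30 : Nat.card G = 30)
    (hN : Nat.card {x : G // x ^ 2 ≠ 1} ≤ 8) : IsSolvable G := by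
  classical
  have hf : Fintype G := Fintype.ofFinite G
  have hp5 : Fact (Nat.Prime 5) := ⟨by norm_num⟩
  obtain ⟨P⟩ : Nonempty (Sylow 5 G) := inferInstance
  have hPcard : Nat.card (P : Subgroup G) = 5 := by
    rw [Sylow.card_eq_multiplicity, h30]
    have : (Nat.factorization 30) 5 = 1 := by
      have hle : 1 ≤ (Nat.factorization 30) 5 :=
        (Nat.Prime.pow_dvd_iff_le_factorization (by norm_num) (by norm_num)).mp (by norm_num)
      have hlt : ¬ (2 ≤ (Nat.factorization 30) 5) := fun hc =>
        (by norm_num : ¬ (5^2 ∣ 30))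
          ((Nat.Prime.pow_dvd_iff_le_factorization (by norm_num) (by norm_num)).mpr hc)
      omega
    rw [this, pow_one]
  have hidx : (P : Subgroup G).index = 6 := by
    have h1 := Subgroup.card_mul_index (P : Subgroup G)
    rw [hPcard, h30] at h1
    omega
  -- number of Sylow 5 subgroups is 1 or 6
  have hdvd : Nat.card (Sylow 5 G) ∣ 6 := hidx ▸ Sylow.card_dvd_index P
  have hmod : Nat.card (Sylow 5 G) % 5 = 1 % 5 := card_sylow_modEq_one 5 G
  have hcases : Nat.card (Sylow 5 G) = 1 ∨ Nat.card (Sylow 5 G) = 6 := by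
    have hle := Nat.le_of_dvd (by norm_num) hdvd
    interval_cases hc : (Nat.card (Sylow 5 G)) <;> revert hdvd hmod <;> decide
  rcases hcases with h1 | h6
  · -- normal Sylow 5
    have hnorm : (P : Subgroup G).Normal := by
      have hs : Subsingleton (Sylow 5 G) := (Nat.card_eq_one_iff_unique.mp h1).1
      rw [← normalizer_eq_top_iff, eq_top_iff']
      intro g
      exact Sylow.smul_eq_iff_mem_normalizer.mp (Subsingleton.elim _ _)
    refine ext_solvable (P : Subgroup G) (sol_pp 5 1 (by norm_num) (by rw [hPcard]; norm_num)) ?_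
    exact sol_six (by rw [← Subgroup.index_eq_card, hidx])
  · -- contradiction with counting
    exfalso
    have hft : Fintype (Sylow 5 G) := Fintype.ofFinite _
    have : Nontrivial (Sylow 5 G) := by
      rw [Nat.card_eq_fintype_card] at h6
      exact Fintype.one_lt_card_iff_nontrivial.mp (by omega)
    obtain ⟨Q, R, hQR⟩ := this
    -- z of order 3
    obtain ⟨z, hz⟩ := exists_prime_orderOf_dvd_card' (G := G) 3 (by rw [h30]; norm_num)
    have hQc : Nat.card (Q : Subgroup G) = 5 := by rw [Sylow.card_eq_multiplicity, ← Sylow.card_eq_multiplicity P, hPcard]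
    have hRc : Nat.card (R : Subgroup G) = 5 := by rw [Sylow.card_eq_multiplicity, ← Sylow.card_eq_multiplicity P, hPcard]
    set NF : Finset G := Finset.univ.filter (fun x : G => x ^ 2 ≠ 1) with hNF
    have hNFcard : NF.card ≤ 8 := by
      rw [hNF, ← Fintype.card_subtype, ← Nat.card_eq_fintype_card] at *
      exact hN
    set FQ : Finset G := Finset.univ.filter (fun x : G => x ∈ (Q : Subgroup G) ∧ x ≠ 1) with hFQ
    set FR : Finset G := Finset.univ.filter (fun x : G => x ∈ (R : Subgroup G) ∧ x ≠ 1) with hFR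
    have hcard_aux : ∀ (T : Sylow 5 G), (Finset.univ.filter (fun x : G => x ∈ (T : Subgroup G) ∧ x ≠ 1)).card = 4 := by
      intro T
      have hTc : Nat.card (T : Subgroup G) = 5 := by
        rw [Sylow.card_eq_multiplicity, ← Sylow.card_eq_multiplicity P, hPcard]
      have heq : Finset.univ.filter (fun x : G => x ∈ (T : Subgroup G) ∧ x ≠ 1)
          = (Finset.univ.filter (fun x : G => x ∈ (T : Subgroup G))).erase 1 := by
        ext x
        simp [Finset.mem_erase, and_comm]
      rw [heq, Finset.card_erase_of_mem (by simp [Subgroup.one_mem]), card_filter_mem, hTc]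
    have hdisjQR : Disjoint FQ FR := by
      rw [Finset.disjoint_left]
      intro x hxQ hxR
      rw [hFQ, Finset.mem_filter] at hxQ
      rw [hFR, Finset.mem_filter] at hxR
      have h1 := (order_five hQc hxQ.2.1 hxQ.2.2).1
      have h2 := (order_five hRc hxR.2.1 hxR.2.2).1
      exact hQR (Sylow.ext (h1.symm.trans h2))
    -- z, z⁻¹
    have hz2 : orderOf (z⁻¹) = 3 := by rw [orderOf_inv, hz]
    have hzz : z ≠ z⁻¹ := by
      intro hc
      have : z ^ 2 = 1 := by rw [pow_two]; nth_rewrite 2 [hc]; exact mul_inv_cancel z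
      have := orderOf_dvd_of_pow_eq_one this
      rw [hz] at this; norm_num at this
    set FZ : Finset G := {z, z⁻¹} with hFZ
    have hFZcard : FZ.card = 2 := Finset.card_pair hzz
    have hdisjZ : Disjoint (FQ ∪ FR) FZ := by
      rw [Finset.disjoint_right]
      intro x hxZ hxU
      have hx3 : orderOf x = 3 := by
        rcases Finset.mem_insert.mp hxZ with h | h
        · rw [h, hz]
        · rw [Finset.mem_singleton.mp h, hz2]
      rcases Finset.mem_union.mp hxU with h | h
      · rw [hFQ, Finset.mem_filter] at h
        have := (order_five hQc h.2.1 h.2.2).2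
        omega
      · rw [hFR, Finset.mem_filter] at h
        have := (order_five hRc h.2.1 h.2.2).2
        omega
    have hsub : FQ ∪ FR ∪ FZ ⊆ NF := by
      intro x hx
      rw [hNF, Finset.mem_filter]
      refine ⟨Finset.mem_univ _, ?_⟩
      intro hc
      have hdvd2 := orderOf_dvd_of_pow_eq_one hc
      rcases Finset.mem_union.mp hx with hx | hxZ
      · rcases Finset.mem_union.mp hx with h | h
        · rw [hFQ, Finset.mem_filter] at h
          have := (order_five hQc h.2.1 h.2.2).2
          rw [this] at hdvd2; norm_num at hdvd2
        · rw [hFR, Finset.mem_filter] at h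
          have := (order_five hRc h.2.1 h.2.2).2
          rw [this] at hdvd2; norm_num at hdvd2
      · have hx3 : orderOf x = 3 := by
          rcases Finset.mem_insert.mp hxZ with h | h
          · rw [h, hz]
          · rw [Finset.mem_singleton.mp h, hz2]
        rw [hx3] at hdvd2; norm_num at hdvd2
    have hcardunion : (FQ ∪ FR ∪ FZ).card = 10 := by
      rw [Finset.card_union_of_disjoint hdisjZ, Finset.card_union_of_disjoint hdisjQR,
        hcard_aux Q, hcard_aux R, hFZcard]
    have := Finset.card_le_card hsub
    omega

end S30

open Subgroup

section ThreeQuarter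
variable {G : Type*} [Group G]

lemma subgroup_eq_top_of_half [Finite G] (C : Subgroup G) (h : Nat.card G < 2 * Nat.card C) :
    C = ⊤ := by
  apply Subgroup.eq_top_of_card_eq
  obtain ⟨k, hk⟩ := Subgroup.card_subgroup_dvd_card C
  have hpos : 0 < Nat.card G := Nat.card_pos
  rcases k with _ | _ | k
  · omega
  · omega
  · exfalso
    have h2 : Nat.card C * 2 ≤ Nat.card C * (k + 1 + 1) := Nat.mul_le_mul_left _ (by omega)
    omega

lemma comm_of_many_involutions [Finite G]
    (h : 3 * Nat.card G < 4 * Nat.card {x : G // x ^ 2 = 1}) :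
    ∀ a b : G, a * b = b * a := by
  classical
  have hfin := Fintype.ofFinite G
  set S : Finset G := Finset.univ.filter (fun x : G => x ^ 2 = 1) with hS
  have hScard : Nat.card {x : G // x ^ 2 = 1} = S.card := by
    rw [Nat.card_eq_fintype_card, Fintype.card_subtype]
  rw [hScard] at h
  have hG : Nat.card G = (Finset.univ : Finset G).card := by
    rw [Nat.card_eq_fintype_card, Finset.card_univ]
  -- every involution is central
  have hcent : ∀ a : G, a ^ 2 = 1 → ∀ x : G, a * x = x * a := by
    intro a ha
    have hainv : a⁻¹ = a := by
      rw [pow_two] at ha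
      exact inv_eq_of_mul_eq_one_right ha
    set S' : Finset G := S.image (fun x => a * x) with hS'
    have hS'card : S'.card = S.card :=
      Finset.card_image_of_injective _ (mul_right_injective a)
    have hinter : 2 * S.card ≤ Nat.card G + (S ∩ S').card := by
      have h1 := Finset.card_union_add_card_inter S S'
      have h2 : (S ∪ S').card ≤ Nat.card G := by
        rw [hG]; exact Finset.card_le_card (Finset.subset_univ _)
      omega
    have hsub : S ∩ S' ⊆ Finset.univ.filter (fun x : G => a * x = x * a) := by
      intro x hx
      obtain ⟨hxS, hxS'⟩ := Finset.mem_inter.mp hx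
      rw [hS, Finset.mem_filter] at hxS
      obtain ⟨y, hyS, hyx⟩ := Finset.mem_image.mp hxS'
      rw [hS, Finset.mem_filter] at hyS
      have hy : y = a * x := by rw [← hyx, ← mul_assoc, ← pow_two, ha, one_mul]
      have hax2 : (a * x) ^ 2 = 1 := by rw [← hy]; exact hyS.2
      have hxinv : x⁻¹ = x := by
        rw [pow_two] at hxS
        exact inv_eq_of_mul_eq_one_right hxS.2
      rw [Finset.mem_filter]
      refine ⟨Finset.mem_univ _, ?_⟩
      rw [pow_two] at hax2
      have : a * x = (a * x)⁻¹ := (inv_eq_of_mul_eq_one_right hax2).symm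
      rw [mul_inv_rev, hainv, hxinv] at this
      exact this
    set C := Subgroup.centralizer ({a} : Set G) with hC
    have hCcard : (Finset.univ.filter (fun x : G => a * x = x * a)).card = Nat.card C := by
      rw [Nat.card_eq_fintype_card]
      rw [Fintype.card_subtype (p := fun x => x ∈ C)]
      congr 1
      apply Finset.filter_congr
      intro x _
      simp [hC, Subgroup.mem_centralizer_singleton_iff, eq_comm]
    have hChalf : Nat.card G < 2 * Nat.card C := by
      have h3 := Finset.card_le_card hsub
      rw [hCcard] at h3
      omega
    have hCtop : C = ⊤ := subgroup_eq_top_of_half C hChalf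
    intro x
    have hx : x ∈ C := hCtop ▸ Subgroup.mem_top x
    exact (Subgroup.mem_centralizer_singleton_iff.mp hx).symm ▸ rfl
  -- the center is large
  have hZsub : S ⊆ Finset.univ.filter (fun x : G => x ∈ Subgroup.center G) := by
    intro a haS
    rw [hS, Finset.mem_filter] at haS
    rw [Finset.mem_filter]
    exact ⟨Finset.mem_univ _, Subgroup.mem_center_iff.mpr (fun g => (hcent a haS.2 g).symm)⟩
  have hZcard : (Finset.univ.filter (fun x : G => x ∈ Subgroup.center G)).card
      = Nat.card (Subgroup.center G) := by
    rw [Nat.card_eq_fintype_card, Fintype.card_subtype]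
  have hZhalf : Nat.card G < 2 * Nat.card (Subgroup.center G) := by
    have := Finset.card_le_card hZsub
    rw [hZcard] at this
    omega
  have hZtop : Subgroup.center G = ⊤ := subgroup_eq_top_of_half _ hZhalf
  intro a b
  have ha : a ∈ Subgroup.center G := hZtop ▸ Subgroup.mem_top a
  exact (Subgroup.mem_center_iff.mp ha b).symm

end ThreeQuarter


section Main
universe u
variable {G : Type u} [Group G]

lemma dvd_mod_check {m p : ℕ} (hm : 0 < m)
    (h : ∀ d, d < m + 1 → d ∣ m → d % p = 1 % p → d = 1) :
    ∀ d, d ∣ m → d % p = 1 % p → d = 1 :=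
  fun d hdvd hmod => h d (Nat.lt_succ_of_le (Nat.le_of_dvd hm hdvd)) hdvd hmod

lemma sol_coset [Finite G] (n a : ℕ) (hc : Nat.card G = n) (hn : n = 2 ^ a * 3)
    (h1 : 2 ^ a ∣ n) (h2 : ¬ 2 ^ (a + 1) ∣ n) : IsSolvable G := by
  have hfact2 : Fact (Nat.Prime 2) := ⟨Nat.prime_two⟩
  obtain ⟨P⟩ : Nonempty (Sylow 2 G) := inferInstance
  have hn0 : n ≠ 0 := by rw [hn]; positivity
  have hPc : Nat.card (P : Subgroup G) = 2 ^ a := by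
    rw [Sylow.card_eq_multiplicity, hc, fact_eq' Nat.prime_two hn0 h1 h2]
  have hPi : (P : Subgroup G).index = 3 := by
    have hmi := Subgroup.card_mul_index (P : Subgroup G)
    rw [hPc, hc, hn] at hmi
    exact Nat.eq_of_mul_eq_mul_left (pow_pos (by norm_num) a) hmi
  exact sol_coset_trick (P : Subgroup G) a hPc hPi

theorem solvable_of_lambda_large {G : Type*} [Group G] [Finite G]
    (t : ℕ) (ht : t ≤ 5) (h : lambdaCover G + t = Nat.card G) :
    IsSolvable G := by
  classical
  rcases subsingleton_or_nontrivial G with hs | hnt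
  · exact isSolvable_of_comm fun a b => Subsingleton.elim _ _
  have hcount := count_lemma hnt t h
  have hN8 : Nat.card {x : G // x ^ 2 ≠ 1} ≤ 8 := by omega
  rcases le_or_gt (Nat.card G) 32 with hle | hgt
  · have hpos : 0 < Nat.card G := Nat.card_pos
    interval_cases hc : (Nat.card G)
    · exact sol_one hc
    · exact sol_pp 2 1 (by norm_num) (by rw [hc]; norm_num)
    · exact sol_pp 3 1 (by norm_num) (by rw [hc]; norm_num)
    · exact sol_pp 2 2 (by norm_num) (by rw [hc]; norm_num)
    · exact sol_pp 5 1 (by norm_num) (by rw [hc]; norm_num)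
    · exact sol_six hc
    · exact sol_pp 7 1 (by norm_num) (by rw [hc]; norm_num)
    · exact sol_pp 2 3 (by norm_num) (by rw [hc]; norm_num)
    · exact sol_pp 3 2 (by norm_num) (by rw [hc]; norm_num)
    · exact sol_step 5 2 1 (by norm_num) (by rw [hc]; norm_num)
        (by rw [hc]; exact fact_eq' (by norm_num) (by norm_num) (by norm_num) (by norm_num))
        (dvd_mod_check (by norm_num) (by decide))
        (fun H _ _ hH => sol_pp 2 1 (by norm_num) (by rw [hH]; norm_num))
    · exact sol_pp 11 1 (by norm_num) (by rw [hc]; norm_num)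
    · exact sol_coset 12 2 hc (by norm_num) (by norm_num) (by norm_num)
    · exact sol_pp 13 1 (by norm_num) (by rw [hc]; norm_num)
    · exact sol_step 7 2 1 (by norm_num) (by rw [hc]; norm_num)
        (by rw [hc]; exact fact_eq' (by norm_num) (by norm_num) (by norm_num) (by norm_num))
        (dvd_mod_check (by norm_num) (by decide))
        (fun H _ _ hH => sol_pp 2 1 (by norm_num) (by rw [hH]; norm_num))
    · exact sol_step 5 3 1 (by norm_num) (by rw [hc]; norm_num)
        (by rw [hc]; exact fact_eq' (by norm_num) (by norm_num) (by norm_num) (by norm_num))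
        (dvd_mod_check (by norm_num) (by decide))
        (fun H _ _ hH => sol_pp 3 1 (by norm_num) (by rw [hH]; norm_num))
    · exact sol_pp 2 4 (by norm_num) (by rw [hc]; norm_num)
    · exact sol_pp 17 1 (by norm_num) (by rw [hc]; norm_num)
    · exact sol_step 3 2 2 (by norm_num) (by rw [hc]; norm_num)
        (by rw [hc]; exact fact_eq' (by norm_num) (by norm_num) (by norm_num) (by norm_num))
        (dvd_mod_check (by norm_num) (by decide))
        (fun H _ _ hH => sol_pp 2 1 (by norm_num) (by rw [hH]; norm_num))
    · exact sol_pp 19 1 (by norm_num) (by rw [hc]; norm_num)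
    · exact sol_step 5 4 1 (by norm_num) (by rw [hc]; norm_num)
        (by rw [hc]; exact fact_eq' (by norm_num) (by norm_num) (by norm_num) (by norm_num))
        (dvd_mod_check (by norm_num) (by decide))
        (fun H _ _ hH => sol_pp 2 2 (by norm_num) (by rw [hH]; norm_num))
    · exact sol_step 7 3 1 (by norm_num) (by rw [hc]; norm_num)
        (by rw [hc]; exact fact_eq' (by norm_num) (by norm_num) (by norm_num) (by norm_num))
        (dvd_mod_check (by norm_num) (by decide))
        (fun H _ _ hH => sol_pp 3 1 (by norm_num) (by rw [hH]; norm_num))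
    · exact sol_step 11 2 1 (by norm_num) (by rw [hc]; norm_num)
        (by rw [hc]; exact fact_eq' (by norm_num) (by norm_num) (by norm_num) (by norm_num))
        (dvd_mod_check (by norm_num) (by decide))
        (fun H _ _ hH => sol_pp 2 1 (by norm_num) (by rw [hH]; norm_num))
    · exact sol_pp 23 1 (by norm_num) (by rw [hc]; norm_num)
    · exact sol_coset 24 3 hc (by norm_num) (by norm_num) (by norm_num)
    · exact sol_pp 5 2 (by norm_num) (by rw [hc]; norm_num)
    · exact sol_step 13 2 1 (by norm_num) (by rw [hc]; norm_num)
        (by rw [hc]; exact fact_eq' (by norm_num) (by norm_num) (by norm_num) (by norm_num))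
        (dvd_mod_check (by norm_num) (by decide))
        (fun H _ _ hH => sol_pp 2 1 (by norm_num) (by rw [hH]; norm_num))
    · exact sol_pp 3 3 (by norm_num) (by rw [hc]; norm_num)
    · exact sol_step 7 4 1 (by norm_num) (by rw [hc]; norm_num)
        (by rw [hc]; exact fact_eq' (by norm_num) (by norm_num) (by norm_num) (by norm_num))
        (dvd_mod_check (by norm_num) (by decide))
        (fun H _ _ hH => sol_pp 2 2 (by norm_num) (by rw [hH]; norm_num))
    · exact sol_pp 29 1 (by norm_num) (by rw [hc]; norm_num)
    · exact sol_thirty hc hN8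
    · exact sol_pp 31 1 (by norm_num) (by rw [hc]; norm_num)
    · exact sol_pp 2 5 (by norm_num) (by rw [hc]; norm_num)
  · apply isSolvable_of_comm
    apply comm_of_many_involutions
    have hfin := Fintype.ofFinite G
    have hsum : Nat.card {x : G // x ^ 2 = 1} + Nat.card {x : G // x ^ 2 ≠ 1}
        = Nat.card G := by
      rw [Nat.card_eq_fintype_card (α := {x : G // x ^ 2 = 1}),
        Nat.card_eq_fintype_card (α := {x : G // x ^ 2 ≠ 1}),
        Fintype.card_subtype, Fintype.card_subtype,
        Nat.card_eq_fintype_card (α := G), ← Finset.card_univ]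
      exact Finset.card_filter_add_card_filter_not _
    omega

end Main
end

section
/- Let G be a finite group. Then λ(G) = |G| − 3 if and only if G is isomorphic to C_4 or to the dihedral group D_8 of order 8, where λ(G) is the number of maximal cyclic subgroups. -/
namespace LambdaAux

open Subgroup

variable {G : Type*} [Group G]

theorem isCyclic_zpowers (g : G) : IsCyclic (zpowers g) := by
  refine ⟨⟨⟨g, mem_zpowers g⟩, ?_⟩⟩
  rintro ⟨x, k, rfl⟩
  exact ⟨k, by ext; simp⟩

theorem exists_zpowers {H : Subgroup G} (h : IsCyclic H) : ∃ g : G, zpowers g = H := by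
  obtain ⟨⟨g, hg⟩, hgen⟩ := h.exists_generator
  refine ⟨g, le_antisymm (by simpa [zpowers_le] using hg) ?_⟩
  intro x hx
  obtain ⟨k, hk⟩ := hgen ⟨x, hx⟩
  exact ⟨k, by simpa using congrArg Subtype.val hk⟩

variable [Finite G]

theorem mem_zpowers_iff_pow {g x : G} : x ∈ zpowers g ↔ ∃ n : ℕ, g ^ n = x := by
  rw [← (isOfFinOrder_of_finite g).mem_powers_iff_mem_zpowers]
  exact Submonoid.mem_powers_iff x g

/-- every element lies in a maximal cyclic subgroup -/
theorem exists_maximal (g : G) : ∃ M : Subgroup G, IsMaximalCyclic M ∧ zpowers g ≤ M := by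
  obtain ⟨M, hM, hmax⟩ := Set.Finite.exists_maximalFor (fun K : Subgroup G => Nat.card K)
    {K : Subgroup G | IsCyclic K ∧ zpowers g ≤ K} (Set.toFinite _)
    ⟨zpowers g, isCyclic_zpowers g, le_refl _⟩
  refine ⟨M, ⟨hM.1, ?_⟩, hM.2⟩
  intro K hK hMK
  have hKs : K ∈ {K : Subgroup G | IsCyclic K ∧ zpowers g ≤ K} := ⟨hK, hM.2.trans hMK⟩
  exact Subgroup.eq_of_le_of_card_ge hMK
    (hmax hKs (Subgroup.card_le_of_le hMK))

theorem not_mcyc_of_mem {M : Subgroup G} (hM : IsMaximalCyclic M) {x : G}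
    (hx : x ∈ M) (hne : zpowers x ≠ M) : ¬ IsMaximalCyclic (zpowers x) := by
  intro h
  exact hne (h.2 M hM.1 ((zpowers_le).2 hx))

theorem mem_zpowers_sq_eq_one {x y : G} (hx : x ^ 2 = 1) (h : y ∈ zpowers x) :
    y = 1 ∨ y = x := by
  obtain ⟨n, rfl⟩ := mem_zpowers_iff_pow.1 h
  have hd : orderOf x ∣ 2 := orderOf_dvd_of_pow_eq_one hx
  have h2 : x ^ (n % 2) = x ^ n := by
    conv_rhs => rw [← pow_mod_orderOf]
    rw [← Nat.mod_mod_of_dvd n hd, pow_mod_orderOf]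
  have : n % 2 = 0 ∨ n % 2 = 1 := by omega
  rcases this with h | h
  · left; rw [← h2, h, pow_zero]
  · right; rw [← h2, h, pow_one]

/-- a subgroup of card ≤ 2 has at most one nontrivial element -/
theorem eq_of_mem_card_le_two {M : Subgroup G} (hM : Nat.card M ≤ 2) {x y : G}
    (hx : x ∈ M) (hy : y ∈ M) (hx1 : x ≠ 1) (hy1 : y ≠ 1) : x = y := by
  have hxo : 2 ≤ orderOf x := by
    have h1 : orderOf x ≠ 1 := by simpa [orderOf_eq_one_iff] using hx1
    have : 0 < orderOf x := (isOfFinOrder_of_finite x).orderOf_pos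
    omega
  have hle : zpowers x ≤ M := zpowers_le.2 hx
  have hcard : Nat.card M ≤ Nat.card (zpowers x) := by
    rw [Nat.card_zpowers]; omega
  have hxM : zpowers x = M := Subgroup.eq_of_le_of_card_ge hle hcard
  have hord : orderOf x = 2 := by
    have := Subgroup.card_le_of_le hle
    rw [Nat.card_zpowers] at this
    omega
  have hsq : x ^ 2 = 1 := by rw [← hord]; exact pow_orderOf_eq_one x
  have := mem_zpowers_sq_eq_one hsq (hxM ▸ hy)
  tauto

section Iso

variable {a : G} (ha : orderOf a = 4)

/-- exponent map from `ZMod 4` -/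
private def emap (a : G) (i : ZMod 4) : G := a ^ i.val

include ha

theorem emap_add (i j : ZMod 4) : emap a (i + j) = emap a i * emap a j := by
  unfold emap
  rw [ZMod.val_add, ← pow_add]
  conv_rhs => rw [← pow_mod_orderOf]
  rw [ha]

theorem emap_zero : emap a 0 = 1 := by simp [emap]

theorem emap_inj : Function.Injective (emap a) := by
  intro i j h
  unfold emap at h
  rw [pow_inj_mod, ha] at h
  rw [Nat.mod_eq_of_lt (ZMod.val_lt i), Nat.mod_eq_of_lt (ZMod.val_lt j)] at h
  exact ZMod.val_injective _ h

theorem emap_surj {x : G} (hx : x ∈ zpowers a) : ∃ i : ZMod 4, emap a i = x := by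
  obtain ⟨n, rfl⟩ := mem_zpowers_iff_pow.1 hx
  refine ⟨(n : ZMod 4), ?_⟩
  unfold emap
  rw [ZMod.val_natCast, ← ha, pow_mod_orderOf]

theorem emap_mem (i : ZMod 4) : emap a i ∈ zpowers a := by
  exact ⟨(i.val : ℤ), zpow_natCast a i.val⟩

theorem emap_neg (i : ZMod 4) : emap a (-i) = (emap a i)⁻¹ := by
  have := emap_add ha i (-i)
  rw [add_neg_cancel, emap_zero ha] at this
  exact (inv_eq_of_mul_eq_one_right this.symm).symm

theorem iso_c4 (htop : ∀ x : G, x ∈ zpowers a) :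
    Nonempty (G ≃* Multiplicative (ZMod 4)) := by
  let f : Multiplicative (ZMod 4) →* G :=
    { toFun := fun i => emap a i.toAdd
      map_one' := emap_zero ha
      map_mul' := fun i j => emap_add ha _ _ }
  refine ⟨(MulEquiv.ofBijective f ⟨?_, ?_⟩).symm⟩
  · intro i j h
    exact emap_inj ha h
  · intro x
    obtain ⟨i, hi⟩ := emap_surj ha (htop x)
    exact ⟨Multiplicative.ofAdd i, hi⟩

theorem iso_d8 {s : G} (hs2 : s * s = 1) (hsa : s * a * s⁻¹ = a⁻¹)
    (hsnot : s ∉ zpowers a) (hcover : ∀ x : G, x ∉ zpowers a → s * x ∈ zpowers a) :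
    Nonempty (G ≃* DihedralGroup 4) := by
  have hsinv : s⁻¹ = s := by
    rw [← mul_one s⁻¹, ← hs2, ← mul_assoc, inv_mul_cancel, one_mul]
  have hconj : ∀ i : ZMod 4, s * emap a i * s = (emap a i)⁻¹ := by
    intro i
    have h1 : s * a ^ i.val * s⁻¹ = (a ^ i.val)⁻¹ := by
      rw [← conj_pow, hsa, inv_pow]
    rw [hsinv] at h1
    exact h1
  have hse : ∀ i : ZMod 4, emap a i * s = s * emap a (-i) := by
    intro i
    rw [emap_neg ha, ← hconj i, ← mul_assoc, ← mul_assoc, hs2, one_mul]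
  let φ : DihedralGroup 4 → G := fun x => match x with
    | DihedralGroup.r i => emap a i
    | DihedralGroup.sr i => s * emap a i
  have hφmul : ∀ x y : DihedralGroup 4, φ (x * y) = φ x * φ y := by
    rintro (i | i) (j | j)
    · show emap a (i + j) = emap a i * emap a j
      exact emap_add ha i j
    · show s * emap a (j - i) = emap a i * (s * emap a j)
      rw [← mul_assoc, hse i, mul_assoc, ← emap_add ha, sub_eq_neg_add]
    · show s * emap a (i + j) = s * emap a i * emap a j
      rw [mul_assoc, emap_add ha]
    · show emap a (j - i) = s * emap a i * (s * emap a j)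
      rw [mul_assoc, ← mul_assoc (emap a i), hse i, ← mul_assoc, ← mul_assoc,
        hs2, one_mul, ← emap_add ha, sub_eq_neg_add]
  have hφinj : Function.Injective φ := by
    have h1 : φ 1 = 1 := by
      show emap a 0 = 1
      exact emap_zero ha
    rintro (i | i) (j | j) h
    · simp only [φ] at h
      rw [emap_inj ha h]
    · exfalso
      have : s = emap a i * (emap a j)⁻¹ := by
        simp only [φ] at h
        rw [h, mul_assoc, mul_inv_cancel, mul_one]
      exact hsnot (this ▸ mul_mem (emap_mem ha i) (inv_mem (emap_mem ha j)))
    · exfalso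
      have : s = emap a j * (emap a i)⁻¹ := by
        simp only [φ] at h
        rw [← h, mul_assoc, mul_inv_cancel, mul_one]
      exact hsnot (this ▸ mul_mem (emap_mem ha j) (inv_mem (emap_mem ha i)))
    · simp only [φ, mul_right_inj] at h
      rw [emap_inj ha h]
  have hφsurj : Function.Surjective φ := by
    intro x
    by_cases hx : x ∈ zpowers a
    · obtain ⟨i, hi⟩ := emap_surj ha hx
      exact ⟨DihedralGroup.r i, hi⟩
    · obtain ⟨i, hi⟩ := emap_surj ha (hcover x hx)
      refine ⟨DihedralGroup.sr i, ?_⟩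
      show s * emap a i = x
      rw [hi, ← mul_assoc, hs2, one_mul]
  let f : DihedralGroup 4 →* G :=
    { toFun := φ, map_one' := emap_zero ha, map_mul' := hφmul }
  exact ⟨(MulEquiv.ofBijective f ⟨hφinj, hφsurj⟩).symm⟩

end Iso

section Transport
omit [Finite G]

variable {H : Type*} [Group H]

theorem map_symm_map (e : G ≃* H) (K : Subgroup G) :
    (K.map e.toMonoidHom).map e.symm.toMonoidHom = K := by
  rw [Subgroup.map_map]
  have : (e.symm.toMonoidHom.comp e.toMonoidHom) = MonoidHom.id G := by
    ext x; simp
  rw [this, Subgroup.map_id]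

theorem mcyc_map (e : G ≃* H) {K : Subgroup G} (h : IsMaximalCyclic K) :
    IsMaximalCyclic (K.map e.toMonoidHom) := by
  constructor
  · haveI := h.1
    exact isCyclic_of_surjective (Subgroup.equivMapOfInjective K e.toMonoidHom e.injective)
      (Subgroup.equivMapOfInjective K e.toMonoidHom e.injective).surjective
  · intro K' hK' hle
    have h1 : K ≤ K'.map e.symm.toMonoidHom := by
      have := Subgroup.map_mono (f := e.symm.toMonoidHom) hle
      rwa [map_symm_map e K] at this
    haveI := hK'
    have h2 : IsCyclic (K'.map e.symm.toMonoidHom) :=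
      isCyclic_of_surjective (Subgroup.equivMapOfInjective K' e.symm.toMonoidHom e.symm.injective)
        (Subgroup.equivMapOfInjective K' e.symm.toMonoidHom e.symm.injective).surjective
    have h3 := h.2 _ h2 h1
    calc K.map e.toMonoidHom = ((K'.map e.symm.toMonoidHom).map e.toMonoidHom) := by rw [← h3]
      _ = K' := map_symm_map e.symm K'
end Transport

omit [Finite G] in
theorem lambdaCover_congr {H : Type*} [Group H] (e : G ≃* H) :
    lambdaCover G = lambdaCover H := by
  refine Nat.card_congr ⟨fun K => ⟨K.1.map e.toMonoidHom, mcyc_map e K.2⟩,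
    fun K => ⟨K.1.map e.symm.toMonoidHom, mcyc_map e.symm K.2⟩, ?_, ?_⟩
  · rintro ⟨K, hK⟩
    exact Subtype.ext (map_symm_map e K)
  · rintro ⟨K, hK⟩
    exact Subtype.ext (map_symm_map e.symm K)

omit [Finite G] in
theorem lambdaCover_of_isCyclic [IsCyclic G] : lambdaCover G = 1 := by
  have htop : IsMaximalCyclic (⊤ : Subgroup G) :=
    ⟨inferInstance, fun K _ hle => le_antisymm hle le_top⟩
  rw [lambdaCover, Nat.card_eq_one_iff_unique]
  constructor
  · constructor
    rintro ⟨K, hK⟩ ⟨K', hK'⟩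
    have h1 := hK.2 ⊤ htop.1 le_top
    have h2 := hK'.2 ⊤ htop.1 le_top
    exact Subtype.ext (h1.trans h2.symm)
  · exact ⟨⟨⊤, htop⟩⟩

section D8

open DihedralGroup

private abbrev D8 := DihedralGroup 4

private theorem d8_mem_sr {i : ZMod 4} {x : D8} (h : x ∈ zpowers (sr i)) :
    x = 1 ∨ x = sr i :=
  mem_zpowers_sq_eq_one (by rw [sq, sr_mul_self]) h

private theorem d8_mem_r {x : D8} (h : x ∈ zpowers (r 1)) : ∃ k : ZMod 4, x = r k := by
  obtain ⟨n, rfl⟩ := mem_zpowers_iff_pow.1 h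
  exact ⟨(n : ZMod 4), by rw [r_one_pow]⟩

private theorem d8_r_mem {j : ZMod 4} : (r j : D8) ∈ zpowers (r 1) :=
  mem_zpowers_iff_pow.2 ⟨j.val, by rw [r_one_pow, ZMod.natCast_rightInverse j]⟩

private theorem d8_zpowers_r_le (j : ZMod 4) : zpowers (r j : D8) ≤ zpowers (r 1) :=
  zpowers_le.2 d8_r_mem

private theorem d8_r1_notmem_sr (i : ZMod 4) : (r 1 : D8) ∉ zpowers (sr i) := by
  intro h
  rcases d8_mem_sr h with h | h
  · exact absurd h (by decide)
  · simp at h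

private theorem d8_max_R : IsMaximalCyclic (zpowers (r 1 : D8)) := by
  refine ⟨isCyclic_zpowers _, fun K hK hle => ?_⟩
  obtain ⟨g, rfl⟩ := exists_zpowers hK
  cases g with
  | r j => exact le_antisymm hle (d8_zpowers_r_le j)
  | sr j => exact absurd (hle (mem_zpowers _)) (d8_r1_notmem_sr j)

private theorem d8_max_S (i : ZMod 4) : IsMaximalCyclic (zpowers (sr i : D8)) := by
  refine ⟨isCyclic_zpowers _, fun K hK hle => ?_⟩
  obtain ⟨g, rfl⟩ := exists_zpowers hK
  cases g with
  | r j =>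
    obtain ⟨k, hk⟩ := d8_mem_r (d8_zpowers_r_le j (hle (mem_zpowers _)))
    exact absurd hk (by simp)
  | sr j =>
    rcases d8_mem_sr (hle (mem_zpowers _)) with h | h
    · rw [one_def] at h; cases h
    · rw [← sr.inj h]

private theorem d8_classify {K : Subgroup D8} (hK : IsMaximalCyclic K) :
    K = zpowers (r 1) ∨ ∃ i : ZMod 4, K = zpowers (sr i) := by
  obtain ⟨g, rfl⟩ := exists_zpowers hK.1
  cases g with
  | sr j => exact Or.inr ⟨j, rfl⟩
  | r j =>
    left
    have h4 : ∀ j : ZMod 4, j = 0 ∨ j = 1 ∨ j = 2 ∨ j = 3 := by decide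
    rcases h4 j with rfl | rfl | rfl | rfl
    · exfalso
      have h0 : zpowers (r 0 : D8) ≤ zpowers (sr 0) :=
        zpowers_le.2 (by rw [← one_def]; exact one_mem _)
      have := hK.2 _ (isCyclic_zpowers (sr 0 : D8)) h0
      have hm : (sr 0 : D8) ∈ zpowers (r 0) := this ▸ mem_zpowers _
      rcases mem_zpowers_iff_pow.1 hm with ⟨n, hn⟩
      rw [show (r 0 : D8) = 1 from (one_def).symm, one_pow] at hn
      exact absurd hn (by decide)
    · rfl
    · exfalso
      have := hK.2 _ (isCyclic_zpowers (r 1 : D8)) (d8_zpowers_r_le 2)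
      have hm : (r 1 : D8) ∈ zpowers (r 2) := this ▸ mem_zpowers _
      rcases mem_zpowers_sq_eq_one (by decide) hm with h | h <;> revert h <;> decide
    · refine le_antisymm (d8_zpowers_r_le 3) (zpowers_le.2 ?_)
      exact mem_zpowers_iff_pow.2 ⟨3, by decide⟩

private theorem d8_lambda : lambdaCover D8 = 5 := by
  have hinj : Function.Bijective
      (fun o : Option (ZMod 4) => (⟨match o with
        | none => zpowers (r 1)
        | some i => zpowers (sr i), by
          cases o with
          | none => exact d8_max_R
          | some i => exact d8_max_S i⟩ : {H : Subgroup D8 // IsMaximalCyclic H})) := by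
    constructor
    · rintro (_ | i) (_ | j) h
      · rfl
      · exfalso
        have := congrArg Subtype.val h
        simp only at this
        exact d8_r1_notmem_sr j (this ▸ mem_zpowers _)
      · exfalso
        have := congrArg Subtype.val h
        simp only at this
        exact d8_r1_notmem_sr i (this.symm ▸ mem_zpowers _)
      · have := congrArg Subtype.val h
        simp only at this
        rcases d8_mem_sr (this ▸ mem_zpowers (sr i)) with h' | h'
        · rw [one_def] at h'; cases h'
        · rw [sr.inj h']
    · rintro ⟨K, hK⟩
      rcases d8_classify hK with rfl | ⟨i, rfl⟩
      · exact ⟨none, rfl⟩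
      · exact ⟨some i, rfl⟩
  have := Nat.card_congr (Equiv.ofBijective _ hinj)
  rw [lambdaCover, ← this, Nat.card_eq_fintype_card]
  decide

end D8

section Backward

open Classical in
/-- chosen generator of a (cyclic) subgroup -/
noncomputable def gsel (M : Subgroup G) : G :=
  if h : ∃ g : G, zpowers g = M then h.choose else 1

theorem gsel_spec {M : Subgroup G} (h : IsCyclic M) : zpowers (gsel M) = M := by
  classical
  rw [gsel, dif_pos (exists_zpowers h)]
  exact (exists_zpowers h).choose_spec

theorem gsel_mem {M : Subgroup G} (h : IsCyclic M) : gsel M ∈ M := by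
  have h2 : gsel M ∈ zpowers (gsel M) := mem_zpowers _
  rwa [gsel_spec h] at h2

theorem zpowers_eq_of_card_le_two {M : Subgroup G} (hM2 : Nat.card M ≤ 2) {x : G}
    (hx : x ∈ M) (hx1 : x ≠ 1) : zpowers x = M := by
  have hxo : 2 ≤ orderOf x := by
    have h1 : orderOf x ≠ 1 := by simpa [orderOf_eq_one_iff] using hx1
    have : 0 < orderOf x := (isOfFinOrder_of_finite x).orderOf_pos
    omega
  exact Subgroup.eq_of_le_of_card_ge (zpowers_le.2 hx) (by rw [Nat.card_zpowers]; omega)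

theorem mem_zpowers_exists_lt {a x : G} {n : ℕ} (hn : 0 < n) (h1 : a ^ n = 1)
    (hx : x ∈ zpowers a) : ∃ k, k < n ∧ a ^ k = x := by
  obtain ⟨m, rfl⟩ := mem_zpowers_iff_pow.1 hx
  refine ⟨m % n, Nat.mod_lt m hn, ?_⟩
  conv_rhs => rw [← Nat.div_add_mod m n, pow_add, pow_mul, h1, one_pow, one_mul]

theorem orderOf_conj (a x : G) : orderOf (a * x * a⁻¹) = orderOf x := by
  have hsc : SemiconjBy a x (a * x * a⁻¹) := by
    unfold SemiconjBy; group
  exact (hsc.orderOf_eq a).symm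

theorem lambdaCover_eq_ncard :
    lambdaCover G = {M : Subgroup G | IsMaximalCyclic M}.ncard :=
  Nat.card_coe_set_eq _

theorem gsel_gen {M : Subgroup G} (hM : IsMaximalCyclic M) :
    zpowers (gsel M) = M := gsel_spec hM.1

theorem img_sub :
    gsel '' {M : Subgroup G | IsMaximalCyclic M} ⊆ {g : G | IsMaximalCyclic (zpowers g)} := by
  rintro x ⟨M, hM, rfl⟩
  simpa [Set.mem_setOf_eq, gsel_gen hM] using hM

theorem img_ncard :
    (gsel '' {M : Subgroup G | IsMaximalCyclic M}).ncard = lambdaCover G := by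
  rw [lambdaCover_eq_ncard]
  exact Set.ncard_image_of_injOn (fun M hM M' hM' h => by
    rw [← gsel_gen hM, ← gsel_gen hM', h])

theorem S_lower (E : Set G) (hE : E ⊆ {g : G | IsMaximalCyclic (zpowers g)})
    (hne : ∀ x ∈ E, gsel (zpowers x) ≠ x) :
    lambdaCover G + E.ncard ≤ {g : G | IsMaximalCyclic (zpowers g)}.ncard := by
  have hdis : Disjoint (gsel '' {M : Subgroup G | IsMaximalCyclic M}) E := by
    rw [Set.disjoint_left]
    rintro x ⟨M, hM, rfl⟩ hxE
    exact hne _ hxE (by rw [gsel_gen hM])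
  calc lambdaCover G + E.ncard
      = (gsel '' {M : Subgroup G | IsMaximalCyclic M} ∪ E).ncard := by
        rw [Set.ncard_union_eq hdis (Set.toFinite _) (Set.toFinite _), img_ncard]
    _ ≤ _ := Set.ncard_le_ncard (Set.union_subset img_sub hE) (Set.toFinite _)

theorem key0 {x : G} (h : ¬ IsMaximalCyclic (zpowers x)) :
    ∃ M : Subgroup G, IsMaximalCyclic M ∧ x ∈ M ∧ zpowers x ≠ M := by
  obtain ⟨M, hM, hle⟩ := exists_maximal x
  exact ⟨M, hM, hle (mem_zpowers x), fun he => h (he ▸ hM)⟩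

theorem hbot [Nontrivial G] : ¬ IsMaximalCyclic (zpowers (1 : G)) := by
  intro h
  obtain ⟨g, hg⟩ := exists_ne (1 : G)
  have h1 : zpowers (1 : G) ≤ zpowers g := by
    rw [zpowers_one_eq_bot]; exact bot_le
  have := h.2 _ (isCyclic_zpowers g) h1
  have : g ∈ zpowers (1 : G) := this ▸ mem_zpowers g
  rw [zpowers_one_eq_bot, Subgroup.mem_bot] at this
  exact hg this

theorem caseC [Nontrivial G]
    (hsmall : ∀ M : Subgroup G, IsMaximalCyclic M → Nat.card M ≤ 2) :
    Nat.card G = lambdaCover G + 1 := by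
  have hS_eq : {g : G | IsMaximalCyclic (zpowers g)} =
      gsel '' {M : Subgroup G | IsMaximalCyclic M} := by
    apply Set.Subset.antisymm _ img_sub
    intro x hx
    have hM : IsMaximalCyclic (zpowers x) := hx
    have hx1 : x ≠ 1 := fun h => hbot (h ▸ hM)
    have hg1 : gsel (zpowers x) ≠ 1 := by
      intro h
      have h2 := gsel_gen hM
      rw [h, zpowers_one_eq_bot] at h2
      have : x ∈ (⊥ : Subgroup G) := h2 ▸ mem_zpowers x
      exact hx1 (Subgroup.mem_bot.1 this)
    have hmemg : gsel (zpowers x) ∈ zpowers (gsel (zpowers x)) := mem_zpowers _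
    rw [gsel_gen hM] at hmemg
    have heq := eq_of_mem_card_le_two (hsmall _ hM) (mem_zpowers x) hmemg hx1 hg1
    exact ⟨zpowers x, hM, heq.symm⟩
  have hN_eq : {g : G | IsMaximalCyclic (zpowers g)}ᶜ = {1} := by
    apply Set.Subset.antisymm
    · intro x hx
      obtain ⟨M, hM, hxM, hne⟩ := key0 hx
      by_contra hx1
      exact hne (zpowers_eq_of_card_le_two (hsmall M hM) hxM hx1)
    · intro x hx
      rw [Set.mem_singleton_iff] at hx
      subst hx
      exact hbot
  have hcount := Set.ncard_add_ncard_compl {g : G | IsMaximalCyclic (zpowers g)}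
  rw [hN_eq, hS_eq, img_ncard, Set.ncard_singleton] at hcount
  omega

theorem caseB [Nontrivial G] (h : Nat.card G = lambdaCover G + 3) {M₀ M₁ : Subgroup G}
    (h0 : IsMaximalCyclic M₀) (h03 : 3 ≤ Nat.card M₀)
    (h1 : IsMaximalCyclic M₁) (h13 : 3 ≤ Nat.card M₁) (hne : M₀ ≠ M₁) : False := by
  have hcount := Set.ncard_add_ncard_compl {g : G | IsMaximalCyclic (zpowers g)}
  have h1N : ({1} : Set G) ⊆ {g : G | IsMaximalCyclic (zpowers g)}ᶜ := by
    intro x hx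
    rw [Set.mem_singleton_iff] at hx
    subst hx
    exact hbot
  have hNge : 1 ≤ ({g : G | IsMaximalCyclic (zpowers g)}ᶜ).ncard := by
    have := Set.ncard_le_ncard h1N (Set.toFinite _)
    simpa using this
  -- generic facts about chosen generators of big maximal cyclic subgroups
  have hgen : ∀ M : Subgroup G, IsMaximalCyclic M → 3 ≤ Nat.card M →
      zpowers (gsel M) = M ∧ orderOf (gsel M) = Nat.card M ∧
      zpowers (gsel M)⁻¹ = M ∧ gsel M ≠ (gsel M)⁻¹ ∧ (gsel M) * (gsel M) ≠ 1 := by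
    intro M hM h3
    have hz := gsel_gen hM
    have hord : orderOf (gsel M) = Nat.card M := by rw [← Nat.card_zpowers, hz]
    have hsq : (gsel M) * (gsel M) ≠ 1 := by
      intro hsq
      have : orderOf (gsel M) ∣ 2 := orderOf_dvd_of_pow_eq_one (by rw [pow_two]; exact hsq)
      have := Nat.le_of_dvd (by norm_num) this
      omega
    refine ⟨hz, hord, by rw [zpowers_inv, hz], ?_, hsq⟩
    intro he
    apply hsq
    nth_rewrite 2 [he]
    exact mul_inv_cancel _
  -- inverse of chosen generator is in S and not chosen
  have hinvS : ∀ M : Subgroup G, IsMaximalCyclic M → 3 ≤ Nat.card M →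
      (gsel M)⁻¹ ∈ {g : G | IsMaximalCyclic (zpowers g)} ∧
      gsel (zpowers (gsel M)⁻¹) ≠ (gsel M)⁻¹ := by
    intro M hM h3
    obtain ⟨hz, hord, hzi, hne', hsq⟩ := hgen M hM h3
    refine ⟨by rw [Set.mem_setOf_eq, hzi]; exact hM, ?_⟩
    rw [hzi]
    exact hne'
  -- step 1 : the complement is exactly {1}
  have hSge : lambdaCover G + 2 ≤ {g : G | IsMaximalCyclic (zpowers g)}.ncard := by
    have hd : (gsel M₀)⁻¹ ≠ (gsel M₁)⁻¹ := by
      intro he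
      apply hne
      rw [← (hgen M₀ h0 h03).2.2.1, ← (hgen M₁ h1 h13).2.2.1, he]
    have := S_lower {(gsel M₀)⁻¹, (gsel M₁)⁻¹} ?_ ?_
    · rwa [Set.ncard_pair hd] at this
    · rintro x (rfl | rfl)
      · exact (hinvS M₀ h0 h03).1
      · exact (hinvS M₁ h1 h13).1
    · rintro x (rfl | rfl)
      · exact (hinvS M₀ h0 h03).2
      · exact (hinvS M₁ h1 h13).2
  have hN1 : ({g : G | IsMaximalCyclic (zpowers g)}ᶜ).ncard = 1 := by omega
  have hNeq : {g : G | IsMaximalCyclic (zpowers g)}ᶜ = {1} := by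
    obtain ⟨x, hx⟩ := Set.ncard_eq_one.1 hN1
    rw [hx]
    rw [hx] at h1N
    rw [Set.singleton_subset_iff, Set.mem_singleton_iff] at h1N
    rw [h1N]
  -- step 2 : every nontrivial element generates a maximal cyclic subgroup
  have hprime : ∀ g : G, g ≠ 1 → IsMaximalCyclic (zpowers g) := by
    intro g hg
    by_contra hcon
    have : g ∈ {g : G | IsMaximalCyclic (zpowers g)}ᶜ := hcon
    rw [hNeq, Set.mem_singleton_iff] at this
    exact hg this
  -- helper : if x ≠ 1 and x ∈ zpowers g then zpowers x = zpowers g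
  have hgenall : ∀ g x : G, x ≠ 1 → x ∈ zpowers g → zpowers x = zpowers g := by
    intro g x hx1 hxg
    exact (hprime x hx1).2 _ (isCyclic_zpowers g) (zpowers_le.2 hxg)
  -- step 2b : all orders are prime
  have hordp : ∀ g : G, g ≠ 1 → Nat.Prime (orderOf g) := by
    intro g hg
    have hn2 : 2 ≤ orderOf g := by
      have h1 : orderOf g ≠ 1 := by simpa [orderOf_eq_one_iff] using hg
      have : 0 < orderOf g := (isOfFinOrder_of_finite g).orderOf_pos
      omega
    by_contra hnp
    set n := orderOf g with hn
    have hfac : Nat.minFac n ∣ n := Nat.minFac_dvd n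
    have hpf : Nat.Prime (Nat.minFac n) := Nat.minFac_prime (by omega)
    have hx : orderOf (g ^ Nat.minFac n) = n / Nat.minFac n := by
      rw [orderOf_pow, ← hn, Nat.gcd_eq_right hfac]
    have hdiv2 : 2 ≤ n / Nat.minFac n := by
      have hne1 : n / Nat.minFac n ≠ 1 := by
        intro he
        have heq := Nat.div_mul_cancel hfac
        rw [he, one_mul] at heq
        rw [heq] at hpf
        exact hnp hpf
      have : 0 < n / Nat.minFac n := Nat.div_pos (Nat.minFac_le (by omega)) (by
        have := hpf.two_le; omega)
      omega
    have hx1 : g ^ Nat.minFac n ≠ 1 := by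
      intro he
      rw [he, orderOf_one] at hx
      omega
    have := hgenall g _ hx1 (zpow_natCast g (Nat.minFac n) ▸ zpow_mem (mem_zpowers g) _)
    have hcard : orderOf (g ^ Nat.minFac n) = orderOf g := by
      rw [← Nat.card_zpowers, this, Nat.card_zpowers]
    rw [hx, ← hn] at hcard
    have := hpf.two_le
    have hlt : n / Nat.minFac n < n := Nat.div_lt_self (by omega) (by omega)
    omega
  -- step 3 : every big maximal cyclic subgroup has exactly 3 elements
  have hthree : ∀ M₂ : Subgroup G, IsMaximalCyclic M₂ → 3 ≤ Nat.card M₂ → M₂ ≠ M₀ → M₂ ≠ M₁ →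
      False := by
    intro M₂ hM2 h23 hne0 hne1
    have hd01 : (gsel M₀)⁻¹ ≠ (gsel M₁)⁻¹ := by
      intro he
      apply hne
      rw [← (hgen M₀ h0 h03).2.2.1, ← (hgen M₁ h1 h13).2.2.1, he]
    have hd02 : (gsel M₀)⁻¹ ≠ (gsel M₂)⁻¹ := by
      intro he
      apply hne0
      rw [← (hgen M₂ hM2 h23).2.2.1, ← (hgen M₀ h0 h03).2.2.1, he]
    have hd12 : (gsel M₁)⁻¹ ≠ (gsel M₂)⁻¹ := by
      intro he
      apply hne1
      rw [← (hgen M₂ hM2 h23).2.2.1, ← (hgen M₁ h1 h13).2.2.1, he]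
    have hS3 := S_lower {(gsel M₀)⁻¹, (gsel M₁)⁻¹, (gsel M₂)⁻¹} ?_ ?_
    · have hcard3 : ({(gsel M₀)⁻¹, (gsel M₁)⁻¹, (gsel M₂)⁻¹} : Set G).ncard = 3 := by
        rw [Set.ncard_insert_of_notMem (by simp [hd01, hd02]) (Set.toFinite _),
          Set.ncard_pair hd12]
      rw [hcard3] at hS3
      omega
    · rintro x (rfl | rfl | rfl)
      · exact (hinvS M₀ h0 h03).1
      · exact (hinvS M₁ h1 h13).1
      · exact (hinvS M₂ hM2 h23).1
    · rintro x (rfl | rfl | rfl)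
      · exact (hinvS M₀ h0 h03).2
      · exact (hinvS M₁ h1 h13).2
      · exact (hinvS M₂ hM2 h23).2
  -- cards are exactly 3
  have hc3 : ∀ M : Subgroup G, IsMaximalCyclic M → 3 ≤ Nat.card M → Nat.card M = 3 := by
    intro M hM h3
    obtain ⟨hz, hord, hzi, hne', hsq⟩ := hgen M hM h3
    set g := gsel M with hgdef
    have hg1 : g ≠ 1 := by
      intro he
      rw [he, orderOf_one] at hord
      omega
    have hp := hordp g hg1
    rw [hord] at hp
    by_contra hne3
    have h5 : 5 ≤ Nat.card M := by
      have h34 : Nat.card M = 3 ∨ Nat.card M = 4 ∨ 5 ≤ Nat.card M := by omega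
      rcases h34 with he | he | he
      · exact absurd he hne3
      · rw [he] at hp
        exact absurd hp (by decide)
      · exact he
    obtain ⟨M', hM', h3', hne'M⟩ :
        ∃ M' : Subgroup G, IsMaximalCyclic M' ∧ 3 ≤ Nat.card M' ∧ M' ≠ M := by
      by_cases hMM0 : M = M₀
      · exact ⟨M₁, h1, h13, fun he => hne (hMM0 ▸ he).symm⟩
      · exact ⟨M₀, h0, h03, fun he => hMM0 he.symm⟩
    have hg1 : g ≠ 1 := by
      intro he
      rw [he, orderOf_one] at hord
      omega
    have hg3 : g * (g * g) ≠ 1 := by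
      intro he
      have hdvd : orderOf g ∣ 3 := orderOf_dvd_of_pow_eq_one (by
        rw [pow_succ, pow_two, mul_assoc, he])
      have := Nat.le_of_dvd (by norm_num) hdvd
      omega
    have hgenall : ∀ u x : G, x ≠ 1 → x ∈ zpowers u → zpowers x = zpowers u := by
      intro u x hx1 hxg
      exact (hprime x hx1).2 _ (isCyclic_zpowers u) (zpowers_le.2 hxg)
    have hzg2 : zpowers (g * g) = M := by
      have hmem : g * g ∈ zpowers g := mem_zpowers_iff_pow.2 ⟨2, pow_two g⟩
      rw [hgenall g (g * g) hsq hmem, hz]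
    have hd1 : g⁻¹ ≠ g * g := by
      intro he
      exact hg3 (by rw [← he, mul_inv_cancel])
    have hd2 : g⁻¹ ≠ (gsel M')⁻¹ := by
      intro he
      apply hne'M
      rw [← (hgen M' hM' h3').2.2.1, ← he, zpowers_inv, hz]
    have hd3 : g * g ≠ (gsel M')⁻¹ := by
      intro he
      apply hne'M
      rw [← (hgen M' hM' h3').2.2.1, ← he, hzg2]
    have hS3 := S_lower {g⁻¹, g * g, (gsel M')⁻¹} ?_ ?_
    · have hcard3 : ({g⁻¹, g * g, (gsel M')⁻¹} : Set G).ncard = 3 := by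
        rw [Set.ncard_insert_of_notMem (by simp [hd1, hd2]) (Set.toFinite _),
          Set.ncard_pair hd3]
      rw [hcard3] at hS3
      omega
    · rintro x (rfl | rfl | rfl)
      · exact (hinvS M hM h3).1
      · show IsMaximalCyclic (zpowers (g * g))
        rw [hzg2]
        exact hM
      · exact (hinvS M' hM' h3').1
    · rintro x (rfl | rfl | rfl)
      · exact (hinvS M hM h3).2
      · rw [hzg2]
        intro he
        rw [← hgdef] at he
        rw [right_eq_mul] at he
        exact hg1 he
      · exact (hinvS M' hM' h3').2
  -- both cards are 3
  have hco0 : Nat.card M₀ = 3 := hc3 M₀ h0 h03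
  have hco1 : Nat.card M₁ = 3 := hc3 M₁ h1 h13
  obtain ⟨hzA, hordA, -, -, hsqA⟩ := hgen M₀ h0 h03
  obtain ⟨hzB, hordB, -, -, hsqB⟩ := hgen M₁ h1 h13
  have ha3 : gsel M₀ ^ 3 = 1 := by rw [← hco0, ← hordA]; exact pow_orderOf_eq_one _
  have hb3 : gsel M₁ ^ 3 = 1 := by rw [← hco1, ← hordB]; exact pow_orderOf_eq_one _
  have ha1 : gsel M₀ ≠ 1 := by
    intro he; rw [he, orderOf_one] at hordA; omega
  have hb1 : gsel M₁ ≠ 1 := by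
    intro he; rw [he, orderOf_one] at hordB; omega
  have haM0 : gsel M₀ ∈ M₀ := gsel_mem h0.1
  have hbM1 : gsel M₁ ∈ M₁ := gsel_mem h1.1
  have hbM0 : gsel M₁ ∉ M₀ := by
    intro hmem
    have hle : M₁ ≤ M₀ := by rw [← hzB]; exact zpowers_le.2 hmem
    exact hne (h1.2 M₀ h0.1 hle).symm
  have haM1 : gsel M₀ ∉ M₁ := by
    intro hmem
    have hle : M₀ ≤ M₁ := by rw [← hzA]; exact zpowers_le.2 hmem
    exact hne (h0.2 M₁ h1.1 hle)
  -- the conjugate of b by a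
  have hordc : orderOf (gsel M₀ * gsel M₁ * (gsel M₀)⁻¹) = 3 := by
    rw [orderOf_conj, hordB, hco1]
  have hc1 : gsel M₀ * gsel M₁ * (gsel M₀)⁻¹ ≠ 1 := by
    intro he; rw [he, orderOf_one] at hordc; omega
  have hcard_c : 3 ≤ Nat.card (zpowers (gsel M₀ * gsel M₁ * (gsel M₀)⁻¹)) := by
    rw [Nat.card_zpowers, hordc]
  have h01 : zpowers (gsel M₀ * gsel M₁ * (gsel M₀)⁻¹) = M₀ ∨
      zpowers (gsel M₀ * gsel M₁ * (gsel M₀)⁻¹) = M₁ := by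
    by_contra hcon
    push_neg at hcon
    exact hthree _ (hprime _ hc1) hcard_c hcon.1 hcon.2
  -- auxiliary : membership of conjugate
  rcases h01 with hc0 | hc1'
  · -- conjugate lies in M₀, so b ∈ M₀, contradiction
    have hcM0 : gsel M₀ * gsel M₁ * (gsel M₀)⁻¹ ∈ M₀ := by
      have hmz := mem_zpowers (gsel M₀ * gsel M₁ * (gsel M₀)⁻¹)
      rwa [hc0] at hmz
    have hb' : gsel M₁ ∈ M₀ := by
      have he : (gsel M₀)⁻¹ * (gsel M₀ * gsel M₁ * (gsel M₀)⁻¹) * gsel M₀ = gsel M₁ := by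
        group
      rw [← he]
      exact mul_mem (mul_mem (inv_mem haM0) hcM0) haM0
    exact hbM0 hb'
  · have hcM1 : gsel M₀ * gsel M₁ * (gsel M₀)⁻¹ ∈ zpowers (gsel M₁) := by
      have hmz := mem_zpowers (gsel M₀ * gsel M₁ * (gsel M₀)⁻¹)
      rw [hc1'] at hmz
      rw [hzB]
      exact hmz
    obtain ⟨k, hk3, hkc⟩ := mem_zpowers_exists_lt (by norm_num) hb3 hcM1
    have hk012 : k = 0 ∨ k = 1 ∨ k = 2 := by omega
    rcases hk012 with rfl | rfl | rfl
    · rw [pow_zero] at hkc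
      exact hc1 hkc.symm
    · -- a and b commute
      rw [pow_one] at hkc
      have hcomm : gsel M₀ * gsel M₁ = gsel M₁ * gsel M₀ := by
        have := congrArg (· * gsel M₀) hkc.symm
        simpa [mul_assoc] using this
      have hab1 : gsel M₀ * gsel M₁ ≠ 1 := by
        intro he
        have : gsel M₀ = (gsel M₁)⁻¹ := mul_eq_one_iff_eq_inv.1 he
        exact haM1 (this ▸ inv_mem hbM1)
      have hab3 : (gsel M₀ * gsel M₁) ^ 3 = 1 := by
        rw [Commute.mul_pow hcomm, ha3, hb3, one_mul]
      have hordab : orderOf (gsel M₀ * gsel M₁) = 3 := by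
        have hdvd : orderOf (gsel M₀ * gsel M₁) ∣ 3 := orderOf_dvd_of_pow_eq_one hab3
        have hne1 : orderOf (gsel M₀ * gsel M₁) ≠ 1 := by
          simpa [orderOf_eq_one_iff] using hab1
        rcases (Nat.Prime.eq_one_or_self_of_dvd (by norm_num) _ hdvd) with he | he <;> omega
      have hcard_ab : 3 ≤ Nat.card (zpowers (gsel M₀ * gsel M₁)) := by
        rw [Nat.card_zpowers, hordab]
      have h01ab : zpowers (gsel M₀ * gsel M₁) = M₀ ∨ zpowers (gsel M₀ * gsel M₁) = M₁ := by
        by_contra hcon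
        push_neg at hcon
        exact hthree _ (hprime _ hab1) hcard_ab hcon.1 hcon.2
      rcases h01ab with habe | habe
      · have hab_mem : gsel M₀ * gsel M₁ ∈ M₀ := by
          have hmz := mem_zpowers (gsel M₀ * gsel M₁)
          rwa [habe] at hmz
        have : gsel M₁ ∈ M₀ := by
          have he : (gsel M₀)⁻¹ * (gsel M₀ * gsel M₁) = gsel M₁ := by group
          rw [← he]
          exact mul_mem (inv_mem haM0) hab_mem
        exact hbM0 this
      · have hab_mem : gsel M₀ * gsel M₁ ∈ M₁ := by
          have hmz := mem_zpowers (gsel M₀ * gsel M₁)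
          rwa [habe] at hmz
        have : gsel M₀ ∈ M₁ := by
          have he : (gsel M₀ * gsel M₁) * (gsel M₁)⁻¹ = gsel M₀ := by group
          rw [← he]
          exact mul_mem hab_mem (inv_mem hbM1)
        exact haM1 this
    · -- the conjugate is b²
      have hcb2 : gsel M₀ * gsel M₁ * (gsel M₀)⁻¹ = gsel M₁ * gsel M₁ := by
        rw [← hkc, pow_two]
      have e1 : gsel M₀ * (gsel M₁ * gsel M₁) * (gsel M₀)⁻¹ = gsel M₁ := by
        have t1 : gsel M₀ * (gsel M₁ * gsel M₁) * (gsel M₀)⁻¹ =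
            (gsel M₀ * gsel M₁ * (gsel M₀)⁻¹) * (gsel M₀ * gsel M₁ * (gsel M₀)⁻¹) := by
          group
        rw [t1, hcb2]
        calc gsel M₁ * gsel M₁ * (gsel M₁ * gsel M₁)
            = gsel M₁ ^ 3 * gsel M₁ := by
              rw [pow_succ, pow_two]
              group
          _ = gsel M₁ := by rw [hb3, one_mul]
      have ha2 : gsel M₀ * gsel M₀ = (gsel M₀)⁻¹ := by
        apply eq_inv_of_mul_eq_one_left
        rw [← pow_two, ← pow_succ, ha3]
      have e2 : (gsel M₀)⁻¹ * gsel M₁ * gsel M₀ = gsel M₁ := by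
        calc (gsel M₀)⁻¹ * gsel M₁ * gsel M₀
            = (gsel M₀ * gsel M₀) * gsel M₁ * (gsel M₀ * gsel M₀)⁻¹ := by
              rw [ha2, inv_inv]
          _ = gsel M₀ * (gsel M₀ * gsel M₁ * (gsel M₀)⁻¹) * (gsel M₀)⁻¹ := by group
          _ = gsel M₀ * (gsel M₁ * gsel M₁) * (gsel M₀)⁻¹ := by rw [hcb2]
          _ = gsel M₁ := e1
      have hcomm : gsel M₁ * gsel M₀ = gsel M₀ * gsel M₁ := by
        have := congrArg (gsel M₀ * ·) e2
        simpa [mul_assoc] using this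
      have hfix : gsel M₀ * gsel M₁ * (gsel M₀)⁻¹ = gsel M₁ := by
        rw [← hcomm, mul_inv_cancel_right]
      rw [hfix] at hcb2
      have : gsel M₁ = 1 := by
        have := hcb2.symm
        rwa [mul_eq_left] at this
      exact hb1 this

theorem caseD [Nontrivial G] (h : Nat.card G = lambdaCover G + 3) {M₀ : Subgroup G}
    (h0 : IsMaximalCyclic M₀) (h03 : 3 ≤ Nat.card M₀)
    (huniq : ∀ M : Subgroup G, IsMaximalCyclic M → 3 ≤ Nat.card M → M = M₀) :
    Nonempty (G ≃* Multiplicative (ZMod 4)) ∨ Nonempty (G ≃* DihedralGroup 4) := by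
  have hz : zpowers (gsel M₀) = M₀ := gsel_gen h0
  have hord : orderOf (gsel M₀) = Nat.card M₀ := by rw [← Nat.card_zpowers, hz]
  have ha1 : gsel M₀ ≠ 1 := by
    intro he; rw [he, orderOf_one] at hord; omega
  have haa1 : gsel M₀ * gsel M₀ ≠ 1 := by
    intro he
    have : orderOf (gsel M₀) ∣ 2 := orderOf_dvd_of_pow_eq_one (by rw [pow_two, he])
    have := Nat.le_of_dvd (by norm_num) this
    omega
  have hainv : gsel M₀ ≠ (gsel M₀)⁻¹ := by
    intro he
    apply haa1
    nth_rewrite 2 [he]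
    exact mul_inv_cancel _
  have hcount := Set.ncard_add_ncard_compl {g : G | IsMaximalCyclic (zpowers g)}
  -- step D1 : Nat.card M₀ ≤ 4
  have hc4 : Nat.card M₀ ≤ 4 := by
    have hFS : {x : G | zpowers x = M₀} ⊆ {g : G | IsMaximalCyclic (zpowers g)} := by
      intro x hx
      show IsMaximalCyclic (zpowers x)
      rw [hx]
      exact h0
    have hFM : {x : G | zpowers x = M₀} ⊆ (M₀ : Set G) := by
      intro x hx
      have := mem_zpowers x
      rwa [hx] at this
    have haF : gsel M₀ ∈ {x : G | zpowers x = M₀} := hz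
    have hMN : (M₀ : Set G) \ {x : G | zpowers x = M₀} ⊆
        {g : G | IsMaximalCyclic (zpowers g)}ᶜ := by
      rintro x ⟨hxM, hxF⟩
      exact not_mcyc_of_mem h0 hxM hxF
    have hS1 := S_lower ({x : G | zpowers x = M₀} \ {gsel M₀})
      (fun x hx => hFS hx.1) ?_
    · rw [Set.ncard_diff_singleton_of_mem haF] at hS1
      have hNge := Set.ncard_le_ncard hMN (Set.toFinite _)
      rw [Set.ncard_diff hFM] at hNge
      have hFle := Set.ncard_le_ncard hFM (Set.toFinite _)
      have haFge : 1 ≤ {x : G | zpowers x = M₀}.ncard := by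
        have := Set.ncard_le_ncard (Set.singleton_subset_iff.2 haF) (Set.toFinite _)
        simpa using this
      have hcoe : (M₀ : Set G).ncard = Nat.card M₀ := (Nat.card_coe_set_eq _).symm
      rw [hcoe] at hNge hFle
      omega
    · rintro x ⟨hx1, hx2⟩
      rw [show zpowers x = M₀ from hx1]
      simp only [Set.mem_singleton_iff] at hx2
      exact fun he => hx2 he.symm
  -- step D2 : upper bound for S
  have hSub : {g : G | IsMaximalCyclic (zpowers g)} ⊆
      (gsel '' {M : Subgroup G | IsMaximalCyclic M}) ∪ {(gsel M₀)⁻¹} := by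
    intro x hx
    have hM : IsMaximalCyclic (zpowers x) := hx
    by_cases h2 : Nat.card (zpowers x) ≤ 2
    · left
      have hx1 : x ≠ 1 := fun he => hbot (he ▸ hM)
      have hg1 : gsel (zpowers x) ≠ 1 := by
        intro he
        have h2' := gsel_gen hM
        rw [he, zpowers_one_eq_bot] at h2'
        have : x ∈ (⊥ : Subgroup G) := h2' ▸ mem_zpowers x
        exact hx1 (Subgroup.mem_bot.1 this)
      have hmemg : gsel (zpowers x) ∈ zpowers (gsel (zpowers x)) := mem_zpowers _
      rw [gsel_gen hM] at hmemg
      have heq := eq_of_mem_card_le_two h2 (mem_zpowers x) hmemg hx1 hg1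
      exact ⟨zpowers x, hM, heq.symm⟩
    · have hM0 : zpowers x = M₀ := huniq _ hM (by omega)
      have hordx : orderOf x = Nat.card M₀ := by rw [← Nat.card_zpowers, hM0]
      have hxmem : x ∈ zpowers (gsel M₀) := by
        rw [hz]
        have := mem_zpowers x
        rwa [hM0] at this
      have h34 : Nat.card M₀ = 3 ∨ Nat.card M₀ = 4 := by omega
      have hapow : gsel M₀ ^ (Nat.card M₀) = 1 := by
        rw [← hord]; exact pow_orderOf_eq_one _
      obtain ⟨k, hklt, hk⟩ := mem_zpowers_exists_lt (by omega) hapow hxmem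
      rcases h34 with h3 | h4
      · rw [h3] at hklt
        have hk012 : k = 0 ∨ k = 1 ∨ k = 2 := by omega
        rcases hk012 with rfl | rfl | rfl
        · rw [pow_zero] at hk
          exfalso
          rw [← hk, orderOf_one] at hordx
          omega
        · rw [pow_one] at hk
          exact Or.inl ⟨M₀, h0, hk⟩
        · right
          rw [Set.mem_singleton_iff, ← hk]
          apply eq_inv_of_mul_eq_one_left
          rw [← pow_succ, show (2:ℕ)+1 = 3 by norm_num, ← h3, hapow]
      · rw [h4] at hklt
        have hk0123 : k = 0 ∨ k = 1 ∨ k = 2 ∨ k = 3 := by omega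
        rcases hk0123 with rfl | rfl | rfl | rfl
        · rw [pow_zero] at hk
          exfalso
          rw [← hk, orderOf_one] at hordx
          omega
        · rw [pow_one] at hk
          exact Or.inl ⟨M₀, h0, hk⟩
        · exfalso
          have hsq : x * x = 1 := by
            rw [← hk, ← pow_add]
            rw [show 2 + 2 = 4 from rfl, ← h4, hapow]
          have : orderOf x ∣ 2 := orderOf_dvd_of_pow_eq_one (by rw [pow_two, hsq])
          have := Nat.le_of_dvd (by norm_num) this
          omega
        · right
          rw [Set.mem_singleton_iff, ← hk]
          apply eq_inv_of_mul_eq_one_left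
          rw [← pow_succ, show (3:ℕ)+1 = 4 by norm_num, ← h4, hapow]
  have hSup : {g : G | IsMaximalCyclic (zpowers g)}.ncard ≤ lambdaCover G + 1 := by
    calc {g : G | IsMaximalCyclic (zpowers g)}.ncard
        ≤ ((gsel '' {M : Subgroup G | IsMaximalCyclic M}) ∪ {(gsel M₀)⁻¹}).ncard :=
          Set.ncard_le_ncard hSub (Set.toFinite _)
      _ ≤ (gsel '' {M : Subgroup G | IsMaximalCyclic M}).ncard + ({(gsel M₀)⁻¹} : Set G).ncard :=
          Set.ncard_union_le _ _
      _ = lambdaCover G + 1 := by rw [img_ncard, Set.ncard_singleton]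
  -- step D3 : lower bound for S
  have hSlo : lambdaCover G + 1 ≤ {g : G | IsMaximalCyclic (zpowers g)}.ncard := by
    have := S_lower {(gsel M₀)⁻¹} ?_ ?_
    · rwa [Set.ncard_singleton] at this
    · intro x hx
      rw [Set.mem_singleton_iff] at hx
      subst hx
      show IsMaximalCyclic (zpowers (gsel M₀)⁻¹)
      rw [zpowers_inv, hz]
      exact h0
    · intro x hx
      rw [Set.mem_singleton_iff] at hx
      subst hx
      rw [zpowers_inv, hz]
      exact hainv
  have hN2 : ({g : G | IsMaximalCyclic (zpowers g)}ᶜ).ncard = 2 := by omega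
  -- step D4 : the order of M₀ is 4
  have hc4' : Nat.card M₀ = 4 := by
    by_contra hne4
    have h3 : Nat.card M₀ = 3 := by omega
    have hsub1 : {g : G | IsMaximalCyclic (zpowers g)}ᶜ ⊆ {1} := by
      intro x hx
      obtain ⟨M, hM, hxM, hne'⟩ := key0 hx
      rw [Set.mem_singleton_iff]
      by_contra hx1
      by_cases h2 : Nat.card M ≤ 2
      · exact hne' (zpowers_eq_of_card_le_two h2 hxM hx1)
      · have hM0 : M = M₀ := huniq _ hM (by omega)
        subst hM0
        have hdvd : orderOf x ∣ 3 := by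
          rw [← h3, ← Nat.card_zpowers]
          exact Subgroup.card_dvd_of_le (zpowers_le.2 hxM)
        rcases (Nat.Prime.eq_one_or_self_of_dvd (by norm_num) _ hdvd) with he | he
        · exact hx1 (orderOf_eq_one_iff.1 he)
        · apply hne'
          apply Subgroup.eq_of_le_of_card_ge (zpowers_le.2 hxM)
          rw [Nat.card_zpowers, he, h3]
    have := Set.ncard_le_ncard hsub1 (Set.toFinite _)
    rw [hN2, Set.ncard_singleton] at this
    omega
  have hord4 : orderOf (gsel M₀) = 4 := by rw [hord, hc4']
  have ha4 : gsel M₀ ^ 4 = 1 := by rw [← hord4]; exact pow_orderOf_eq_one _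
  -- every element has order dividing 4
  have hdvd4 : ∀ x : G, orderOf x ∣ 4 := by
    intro x
    obtain ⟨M, hM, hle⟩ := exists_maximal x
    have hdvd' : orderOf x ∣ Nat.card M := by
      rw [← Nat.card_zpowers]
      exact Subgroup.card_dvd_of_le hle
    by_cases h2 : 3 ≤ Nat.card M
    · have := huniq _ hM h2
      subst this
      rwa [hc4'] at hdvd'
    · have hpos : 0 < Nat.card M := Nat.card_pos
      have h12 : Nat.card M = 1 ∨ Nat.card M = 2 := by omega
      rcases h12 with he | he <;> rw [he] at hdvd'
      · exact dvd_trans hdvd' (by norm_num)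
      · exact dvd_trans hdvd' (by norm_num)
  -- elements of order 4 lie in zpowers (gsel M₀)
  have hx4 : ∀ x : G, orderOf x = 4 → x ∈ zpowers (gsel M₀) := by
    intro x hx
    obtain ⟨M, hM, hle⟩ := exists_maximal x
    have hcard : 4 ≤ Nat.card M := by
      have := Subgroup.card_le_of_le hle
      rw [Nat.card_zpowers, hx] at this
      exact this
    have := huniq _ hM (by omega)
    subst this
    rw [hz]
    exact hle (mem_zpowers x)
  have hout2 : ∀ x : G, x ∉ zpowers (gsel M₀) → x * x = 1 ∧ x ≠ 1 := by
    intro x hx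
    have hx1 : x ≠ 1 := by
      intro he
      exact hx (he ▸ one_mem _)
    have hd := hdvd4 x
    have hle4 : orderOf x ≤ 4 := Nat.le_of_dvd (by norm_num) hd
    have hne3 : orderOf x ≠ 3 := by intro he; rw [he] at hd; norm_num at hd
    have hne4' : orderOf x ≠ 4 := fun he => hx (hx4 x he)
    have hne1' : orderOf x ≠ 1 := by simpa [orderOf_eq_one_iff] using hx1
    have hpos : 0 < orderOf x := (isOfFinOrder_of_finite x).orderOf_pos
    have h2 : orderOf x = 2 := by omega
    refine ⟨?_, hx1⟩
    rw [← pow_two, ← h2]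
    exact pow_orderOf_eq_one x
  -- conjugation by outside elements inverts the generator
  have hconj : ∀ x : G, x ∉ zpowers (gsel M₀) → x * gsel M₀ * x⁻¹ = (gsel M₀)⁻¹ := by
    intro x hx
    have hordc : orderOf (x * gsel M₀ * x⁻¹) = 4 := by rw [orderOf_conj, hord4]
    have hmem : x * gsel M₀ * x⁻¹ ∈ zpowers (gsel M₀) := hx4 _ hordc
    obtain ⟨k, hklt, hk⟩ := mem_zpowers_exists_lt (by norm_num) ha4 hmem
    have hk0123 : k = 0 ∨ k = 1 ∨ k = 2 ∨ k = 3 := by omega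
    rcases hk0123 with rfl | rfl | rfl | rfl
    · exfalso
      rw [pow_zero] at hk
      rw [← hk, orderOf_one] at hordc
      omega
    · -- commuting case : contradiction
      exfalso
      rw [pow_one] at hk
      have hcomm : x * gsel M₀ = gsel M₀ * x := by
        have := congrArg (· * x) hk
        simpa [mul_assoc] using this.symm
      have hxx : x * x = 1 := (hout2 x hx).1
      have htt : (x * gsel M₀) * (x * gsel M₀) = gsel M₀ * gsel M₀ := by
        calc (x * gsel M₀) * (x * gsel M₀)
            = x * (gsel M₀ * x) * gsel M₀ := by group
          _ = x * (x * gsel M₀) * gsel M₀ := by rw [← hcomm]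
          _ = (x * x) * (gsel M₀ * gsel M₀) := by group
          _ = gsel M₀ * gsel M₀ := by rw [hxx, one_mul]
      have htt1 : (x * gsel M₀) * (x * gsel M₀) ≠ 1 := by rw [htt]; exact haa1
      have hordt : orderOf (x * gsel M₀) = 4 := by
        have hd := hdvd4 (x * gsel M₀)
        have hle4 : orderOf (x * gsel M₀) ≤ 4 := Nat.le_of_dvd (by norm_num) hd
        have hne3 : orderOf (x * gsel M₀) ≠ 3 := by
          intro he; rw [he] at hd; norm_num at hd
        have hne1' : orderOf (x * gsel M₀) ≠ 1 := by
          intro he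
          rw [orderOf_eq_one_iff] at he
          simp [he] at htt1
        have hne2 : orderOf (x * gsel M₀) ≠ 2 := by
          intro he
          apply htt1
          rw [← pow_two, ← he]
          exact pow_orderOf_eq_one _
        have hpos : 0 < orderOf (x * gsel M₀) := (isOfFinOrder_of_finite _).orderOf_pos
        omega
      have hmem' : x * gsel M₀ ∈ zpowers (gsel M₀) := hx4 _ hordt
      have : x ∈ zpowers (gsel M₀) := by
        have he : (x * gsel M₀) * (gsel M₀)⁻¹ = x := by group
        rw [← he]
        exact mul_mem hmem' (inv_mem (mem_zpowers _))
      exact hx this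
    · -- order-2 image : contradiction
      exfalso
      have hsq2 : (gsel M₀ ^ 2) * (gsel M₀ ^ 2) = 1 := by
        rw [← pow_add]
        exact ha4
      have : (x * gsel M₀ * x⁻¹) * (x * gsel M₀ * x⁻¹) = 1 := by
        rw [← hk]
        exact hsq2
      have hdd : orderOf (x * gsel M₀ * x⁻¹) ∣ 2 :=
        orderOf_dvd_of_pow_eq_one (by rw [pow_two, this])
      have := Nat.le_of_dvd (by norm_num) hdd
      omega
    · rw [← hk]
      apply eq_inv_of_mul_eq_one_left
      rw [← pow_succ]
      exact ha4
  -- final dichotomy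
  by_cases hall : ∀ x : G, x ∈ zpowers (gsel M₀)
  · exact Or.inl (iso_c4 hord4 hall)
  · push_neg at hall
    obtain ⟨s, hs⟩ := hall
    refine Or.inr (iso_d8 hord4 (hout2 s hs).1 (hconj s hs) hs ?_)
    intro x hx
    by_contra hsx
    have h1 := hconj _ hsx
    have h2 : (s * x) * gsel M₀ * (s * x)⁻¹ = gsel M₀ := by
      calc (s * x) * gsel M₀ * (s * x)⁻¹
          = s * (x * gsel M₀ * x⁻¹) * s⁻¹ := by group
        _ = s * (gsel M₀)⁻¹ * s⁻¹ := by rw [hconj x hx]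
        _ = (s * gsel M₀ * s⁻¹)⁻¹ := by group
        _ = ((gsel M₀)⁻¹)⁻¹ := by rw [hconj s hs]
        _ = gsel M₀ := inv_inv _
    have heq : (gsel M₀)⁻¹ = gsel M₀ := h1.symm.trans h2
    apply haa1
    nth_rewrite 1 [← heq]
    exact inv_mul_cancel _

theorem backward (h : Nat.card G = lambdaCover G + 3) :
    Nonempty (G ≃* Multiplicative (ZMod 4)) ∨ Nonempty (G ≃* DihedralGroup 4) := by
  rcases subsingleton_or_nontrivial G with hs | hn
  · exfalso
    have h1 : Nat.card G = 1 := Nat.card_eq_one_iff_unique.2 ⟨hs, ⟨1⟩⟩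
    omega
  · by_cases hbig : ∃ M : Subgroup G, IsMaximalCyclic M ∧ 3 ≤ Nat.card M
    · obtain ⟨M₀, h0, h03⟩ := hbig
      by_cases huniq : ∀ M : Subgroup G, IsMaximalCyclic M → 3 ≤ Nat.card M → M = M₀
      · exact caseD h h0 h03 huniq
      · exfalso
        push_neg at huniq
        obtain ⟨M₁, h1', h13, hne1⟩ := huniq
        exact caseB h h0 h03 h1' h13 (fun he => hne1 he.symm)
    · exfalso
      push_neg at hbig
      have h1 := caseC (fun M hM => by have := hbig M hM; omega)
      omega

end Backward

end LambdaAux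

theorem lambda_eq_card_sub_three_iff {G : Type*} [Group G] [Finite G] :
    Nat.card G = lambdaCover G + 3 ↔
      (Nonempty (G ≃* Multiplicative (ZMod 4)) ∨
       Nonempty (G ≃* DihedralGroup 4)) := by
  constructor
  · exact LambdaAux.backward
  · intro hiso
    rcases hiso with he | he
    all_goals obtain ⟨e⟩ := he
    · haveI : IsCyclic G := isCyclic_of_surjective e.symm.toMonoidHom e.symm.surjective
      rw [LambdaAux.lambdaCover_of_isCyclic]
      have hcard : Nat.card G = 4 := by
        rw [Nat.card_congr e.toEquiv]
        simp [Nat.card_eq_fintype_card]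
      omega
    · rw [LambdaAux.lambdaCover_congr e, LambdaAux.d8_lambda]
      have hcard : Nat.card G = 8 := by
        rw [Nat.card_congr e.toEquiv, DihedralGroup.nat_card]
      omega
end
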